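/- arXiv:1804.04504 — 10 statements merged into one kernel-verified Lean document; each statement's English description precedes it below -/
import Mathlib

section
/- For an even number n = 2k of teams with n ≥ 4, any schedule (i.e., any linear ordering of all n(n-1)/2 games) of a single round-robin tournament has guaranteed rest time at most k - 2. -/
/-- `f` lists the games of a single round-robin tournament on `n` teams:
positions `0, ..., N-1` are in bijection with the unordered pairs of distinct teams. -/
def isSchedule (n N : ℕ) (f : ℕ → Sym2 (Fin n)) : Prop :=
  (∀ i, i < N → ¬ (f i).IsDiag) ∧
  ∀ p : Sym2 (Fin n), ¬ p.IsDiag → ∃! i, i < N ∧ f i = p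

/-- The schedule has guaranteed rest time at least `b`: any two games involving a
common team `t` are separated by at least `b` games not involving `t`. -/
def hasRest (n N : ℕ) (f : ℕ → Sym2 (Fin n)) (b : ℕ) : Prop :=
  ∀ t : Fin n, ∀ i j, i < j → j < N → t ∈ f i → t ∈ f j →
    b ≤ ((Finset.Ioo i j).filter (fun l => t ∉ f l)).card

/-- Number of games played by team `t` in the first `m` games. -/
def played (n : ℕ) (f : ℕ → Sym2 (Fin n)) (t : Fin n) (m : ℕ) : ℕ :=
  ((Finset.range m).filter (fun i => t ∈ f i)).card

/-- The games-played difference index is at most `p`. -/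
def gpLe (n N : ℕ) (f : ℕ → Sym2 (Fin n)) (p : ℕ) : Prop :=
  ∀ m, m ≤ N → ∀ t1 t2 : Fin n, played n f t1 m ≤ played n f t2 m + p

/-- The rest of team `t` going into the game at position `i`: the number of games since
`t`'s previous game, where all teams play an imaginary game one slot before game `0`. -/
def rest (n : ℕ) (f : ℕ → Sym2 (Fin n)) (t : Fin n) (i : ℕ) : ℕ :=
  ((Finset.range i).filter (fun j => ∀ l, j ≤ l → l < i → t ∉ f l)).card

/-- The rest difference index is at most `d`. -/
def rdLe (n N : ℕ) (f : ℕ → Sym2 (Fin n)) (d : ℕ) : Prop :=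
  ∀ i, i < N → ∀ t1 t2 : Fin n, t1 ∈ f i → t2 ∈ f i →
    rest n f t1 i ≤ rest n f t2 i + d

/-!
Rest time `k - 1` forces any two games of a team to be at least `k` positions apart. Hence the
`k` games at positions `1, …, k` are pairwise disjoint, so they involve all `2k` teams. Both teams
of game `0` must therefore play again within positions `1, …, k`, and the rest requirement leaves
only position `k`: game `k` repeats game `0`, which a schedule forbids.
-/

open Finset

theorem isSchedule.eq_of_apply_eq {n N : ℕ} {f : ℕ → Sym2 (Fin n)} (hf : isSchedule n N f)
    {i j : ℕ} (hi : i < N) (hj : j < N) (hij : f i = f j) : i = j := by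
  obtain ⟨i₀, -, huniq⟩ := hf.2 (f i) (hf.1 i hi)
  rw [huniq i ⟨hi, rfl⟩, huniq j ⟨hj, hij.symm⟩]

theorem exists_mem_of_pairwiseDisjoint_toFinset {α : Type*} [Fintype α] [DecidableEq α]
    {f : ℕ → Sym2 α} {s : Finset ℕ} (hdiag : ∀ i ∈ s, ¬ (f i).IsDiag)
    (hdisj : (s : Set ℕ).PairwiseDisjoint fun i => (f i).toFinset)
    (hcard : Fintype.card α ≤ 2 * #s) (t : α) : ∃ i ∈ s, t ∈ f i := by
  have hcover : s.biUnion (fun i => (f i).toFinset) = univ := by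
    refine eq_univ_of_card _ (le_antisymm (card_le_univ _) ?_)
    rw [card_biUnion hdisj, sum_congr rfl fun i hi => Sym2.card_toFinset_of_not_isDiag _ (hdiag i hi),
      sum_const, smul_eq_mul, mul_comm]
    exact hcard
  have ht : t ∈ s.biUnion (fun i => (f i).toFinset) := hcover ▸ mem_univ t
  simpa using ht

namespace hasRest

variable {n N b : ℕ} {f : ℕ → Sym2 (Fin n)}

theorem add_lt_of_mem (hf : hasRest n N f b) {t : Fin n} {i j : ℕ} (hij : i < j) (hj : j < N)
    (hti : t ∈ f i) (htj : t ∈ f j) : i + b < j := by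
  have hrest := hf t i j hij hj hti htj
  have := (card_filter_le (Ioo i j) fun l => t ∉ f l).trans_eq (Nat.card_Ioo i j)
  omega

theorem pairwiseDisjoint_Icc (hf : hasRest n N f b) {a : ℕ} (ha : a + b < N) :
    ((Icc a (a + b) : Finset ℕ) : Set ℕ).PairwiseDisjoint fun i => (f i).toFinset := by
  intro i hi j hj hne
  simp only [coe_Icc, Set.mem_Icc] at hi hj
  refine disjoint_left.mpr fun t hti htj => ?_
  rw [Sym2.mem_toFinset] at hti htj
  rcases hne.lt_or_gt with hij | hji
  · have := hf.add_lt_of_mem hij (by omega) hti htj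
    omega
  · have := hf.add_lt_of_mem hji (by omega) htj hti
    omega

theorem mem_add_of_mem (hf : hasRest n N f b) (hdiag : ∀ i < N, ¬ (f i).IsDiag)
    (hn : n ≤ 2 * (b + 1)) {a : ℕ} (ha : a + b + 1 < N) {t : Fin n} (ht : t ∈ f a) :
    t ∈ f (a + b + 1) := by
  obtain ⟨p, hp, htp⟩ := exists_mem_of_pairwiseDisjoint_toFinset
    (s := Icc (a + 1) (a + 1 + b)) (fun i hi => hdiag i (by rw [mem_Icc] at hi; omega))
    (hf.pairwiseDisjoint_Icc (by omega)) (by rw [Fintype.card_fin, Nat.card_Icc]; omega) t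
  rw [mem_Icc] at hp
  have := hf.add_lt_of_mem (by omega) (by omega) ht htp
  rwa [show p = a + b + 1 by omega] at htp

end hasRest

/-- Any schedule for a tournament with an even number `n = 2k ≥ 4` of teams has
guaranteed rest time at most `k - 2`, i.e., it does not have guaranteed rest time
`k - 1`. -/
theorem stmt0 (k : ℕ) (hk : 2 ≤ k) (f : ℕ → Sym2 (Fin (2*k)))
    (hf : isSchedule (2*k) (2*k*(2*k-1)/2) f) :
    ¬ hasRest (2*k) (2*k*(2*k-1)/2) f (k-1) := by
  intro hrest
  have hkN : k < 2*k*(2*k-1)/2 := by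
    rw [mul_assoc, Nat.mul_div_cancel_left _ two_pos]
    exact lt_mul_of_one_lt_right (by omega) (by omega)
  have hk' : 0 + (k - 1) + 1 = k := by omega
  have hd0 := hf.1 0 (by omega)
  induction h0 : f 0 using Sym2.ind with
  | _ x y =>
    have hxy : x ≠ y := by rwa [h0, Sym2.mk_isDiag_iff] at hd0
    have plays_again : ∀ t ∈ f 0, t ∈ f k := fun t ht => by
      simpa only [hk'] using hrest.mem_add_of_mem hf.1 (by omega) (by omega) ht
    have hrepeat : f k = f 0 := by
      rw [h0, ← Sym2.mem_and_mem_iff hxy]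
      exact ⟨plays_again x (by simp [h0]), plays_again y (by simp [h0])⟩
    have := hf.eq_of_apply_eq hkN (by omega) hrepeat
    omega
end

section
/- For an odd number n = 2k+1 of teams with n ≥ 3, any schedule of a single round-robin tournament has guaranteed rest time at most k - 1. -/
-- splitting lemma
lemma max_split (n : ℕ) (f : ℕ → Sym2 (Fin n)) (a : Fin n) (m : ℕ)
    (h : ((Finset.range m).filter (fun i => a ∈ f i)).Nonempty) :
    played n f a m = played n f a (((Finset.range m).filter (fun i => a ∈ f i)).max' h) + 1 := by
  set S := (Finset.range m).filter (fun i => a ∈ f i) with hS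
  set j := S.max' h with hj
  have hjS : j ∈ S := S.max'_mem h
  have hjm : j < m := Finset.mem_range.mp (Finset.mem_filter.mp hjS).1
  have haj : a ∈ f j := (Finset.mem_filter.mp hjS).2
  have hins : S = insert j ((Finset.range j).filter (fun i => a ∈ f i)) := by
    ext l
    simp only [hS, Finset.mem_insert, Finset.mem_filter, Finset.mem_range]
    constructor
    · rintro ⟨hl, hal⟩
      have hle : l ≤ j := S.le_max' l (Finset.mem_filter.mpr ⟨Finset.mem_range.mpr hl, hal⟩)
      rcases eq_or_lt_of_le hle with he | hlt
      · exact Or.inl he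
      · exact Or.inr ⟨hlt, hal⟩
    · rintro (rfl | ⟨hl, hal⟩)
      · exact ⟨hjm, haj⟩
      · exact ⟨hl.trans hjm, hal⟩
  have hnot : j ∉ (Finset.range j).filter (fun i => a ∈ f i) := by
    simp
  unfold played
  rw [← hS, hins, Finset.card_insert_of_notMem hnot]

lemma key (k : ℕ) (N : ℕ) (f : ℕ → Sym2 (Fin (2*k+1)))
    (hrest : hasRest (2*k+1) N f k) :
    ∀ c, ∀ a : Fin (2*k+1), ∀ j, j < N → a ∈ f j → played (2*k+1) f a j = c →
      ∃ q, a ∈ f q ∧ q + (k+1)*c ≤ j := by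
  intro c
  induction c with
  | zero => intro a j hj haj _; exact ⟨j, haj, by omega⟩
  | succ c ih =>
    intro a j hj haj hc
    have hne : ((Finset.range j).filter (fun i => a ∈ f i)).Nonempty := by
      rw [← Finset.card_pos]
      unfold played at hc; omega
    set S := (Finset.range j).filter (fun i => a ∈ f i) with hS
    set i := S.max' hne with hi
    have hiS : i ∈ S := S.max'_mem hne
    have hij : i < j := Finset.mem_range.mp (Finset.mem_filter.mp hiS).1
    have hai : a ∈ f i := (Finset.mem_filter.mp hiS).2
    have hpi : played (2*k+1) f a i = c := by
      have h1 := max_split (2*k+1) f a j hne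
      have h2 : played (2*k+1) f a j = played (2*k+1) f a i + 1 := h1
      omega
    have hno : ∀ l, i < l → l < j → a ∉ f l := by
      intro l h1 h2 hal
      have hlS : l ∈ S := Finset.mem_filter.mpr ⟨Finset.mem_range.mpr h2, hal⟩
      exact absurd (S.le_max' l hlS) (by omega)
    have hspace := hrest a i j hij hj hai haj
    have hcard : ((Finset.Ioo i j).filter (fun l => a ∉ f l)).card = j - i - 1 := by
      rw [Finset.filter_true_of_mem, Nat.card_Ioo]
      intro l hl
      obtain ⟨h1, h2⟩ := Finset.mem_Ioo.mp hl
      exact hno l h1 h2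
    obtain ⟨q, haq, hq⟩ := ih a i (hij.trans hj) hai hpi
    refine ⟨q, haq, ?_⟩
    have : (k+1)*(c+1) = (k+1)*c + (k+1) := by ring
    omega

lemma cardA (k : ℕ) (f : ℕ → Sym2 (Fin (2*k+1)))
    (hf : isSchedule (2*k+1) ((2*k+1)*(2*k)/2) f) (a : Fin (2*k+1)) :
    played (2*k+1) f a ((2*k+1)*(2*k)/2) = 2*k := by
  set N := (2*k+1)*(2*k)/2 with hN
  unfold played
  have hcard : (Finset.univ.erase a).card = 2*k := by
    rw [Finset.card_erase_of_mem (Finset.mem_univ a), Finset.card_univ, Fintype.card_fin]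
    omega
  have hbij : (Finset.univ.erase a).card = ((Finset.range N).filter (fun i => a ∈ f i)).card := by
    apply Finset.card_bij (fun u hu => (hf.2 s(a, u) (by
      rw [Sym2.mk_isDiag_iff]
      exact fun h => (Finset.mem_erase.mp hu).1 h.symm)).choose)
    · intro u hu
      have hspec := (hf.2 s(a, u) (by
        rw [Sym2.mk_isDiag_iff]
        exact fun h => (Finset.mem_erase.mp hu).1 h.symm)).choose_spec
      obtain ⟨⟨h1, h2⟩, _⟩ := hspec
      refine Finset.mem_filter.mpr ⟨Finset.mem_range.mpr h1, ?_⟩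
      rw [h2]
      exact Sym2.mem_mk_left a u
    · intro u hu v hv heq
      have hu1 := (hf.2 s(a, u) (by
        rw [Sym2.mk_isDiag_iff]
        exact fun h => (Finset.mem_erase.mp hu).1 h.symm)).choose_spec.1.2
      have hv1 := (hf.2 s(a, v) (by
        rw [Sym2.mk_isDiag_iff]
        exact fun h => (Finset.mem_erase.mp hv).1 h.symm)).choose_spec.1.2
      rw [heq, hv1] at hu1
      rw [Sym2.eq_iff] at hu1
      rcases hu1 with ⟨_, h⟩ | ⟨h1, h2⟩
      · exact h.symm
      · exact absurd h1.symm (Finset.mem_erase.mp hu).1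
    · intro i hi
      obtain ⟨hiN, hai⟩ := Finset.mem_filter.mp hi
      have hiN' : i < N := Finset.mem_range.mp hiN
      obtain ⟨u, hu⟩ := Sym2.mem_iff_exists.mp hai
      have hnd : ¬ (f i).IsDiag := hf.1 i hiN'
      have hua : u ≠ a := by
        intro h
        apply hnd
        rw [hu, h, Sym2.mk_isDiag_iff]
      have humem : u ∈ Finset.univ.erase a := Finset.mem_erase.mpr ⟨hua, Finset.mem_univ u⟩
      refine ⟨u, humem, ?_⟩
      have hspec := (hf.2 s(a, u) (by
        rw [Sym2.mk_isDiag_iff]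
        exact fun h => hua h.symm)).choose_spec
      exact (hspec.2 i ⟨hiN', hu⟩).symm
  omega

lemma all_in_zero (k : ℕ) (hk : 1 ≤ k) (f : ℕ → Sym2 (Fin (2*k+1)))
    (hf : isSchedule (2*k+1) ((2*k+1)*(2*k)/2) f)
    (hrest : hasRest (2*k+1) ((2*k+1)*(2*k)/2) f k) (a : Fin (2*k+1)) :
    a ∈ f 0 := by
  obtain ⟨m, rfl⟩ : ∃ m, k = m + 1 := ⟨k - 1, by omega⟩
  set N := (2*(m+1)+1)*(2*(m+1))/2 with hN
  have hNval : (2*(m+1)+1)*(2*(m+1)) = 2*(2*(m*m) + 5*m + 3) := by ring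
  have hNeq : N = 2*(m*m) + 5*m + 3 := by omega
  have hpN : played (2*(m+1)+1) f a N = 2*(m+1) := cardA (m+1) f hf a
  have hne : ((Finset.range N).filter (fun i => a ∈ f i)).Nonempty := by
    rw [← Finset.card_pos]
    unfold played at hpN
    omega
  set j := ((Finset.range N).filter (fun i => a ∈ f i)).max' hne with hj
  have hjS : j ∈ (Finset.range N).filter (fun i => a ∈ f i) :=
    Finset.max'_mem _ hne
  have hjN : j < N := Finset.mem_range.mp (Finset.mem_filter.mp hjS).1
  have haj : a ∈ f j := (Finset.mem_filter.mp hjS).2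
  have hsplit : played (2*(m+1)+1) f a N = played (2*(m+1)+1) f a j + 1 :=
    max_split (2*(m+1)+1) f a N hne
  have hpj : played (2*(m+1)+1) f a j = 2*m+1 := by omega
  obtain ⟨q, haq, hq⟩ := key (m+1) N f hrest (2*m+1) a j hjN haj hpj
  have hmul : (m+1+1)*(2*m+1) = 2*(m*m) + 5*m + 2 := by ring
  have hq0 : q = 0 := by omega
  rwa [hq0] at haq

/-- Any schedule for a tournament with an odd number `n = 2k+1 ≥ 3` of teams has
guaranteed rest time at most `k - 1`, i.e., it does not have guaranteed rest time `k`. -/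
theorem stmt1 (k : ℕ) (hk : 1 ≤ k) (f : ℕ → Sym2 (Fin (2*k+1)))
    (hf : isSchedule (2*k+1) ((2*k+1)*(2*k)/2) f) :
    ¬ hasRest (2*k+1) ((2*k+1)*(2*k)/2) f k := by
  intro hrest
  have h0 : ∀ a : Fin (2*k+1), a ∈ f 0 := all_in_zero k hk f hf hrest
  have hb : (⟨1, by omega⟩ : Fin (2*k+1)) ∈ f 0 := h0 _
  have hc : (⟨2, by omega⟩ : Fin (2*k+1)) ∈ f 0 := h0 _
  obtain ⟨y, hy⟩ := Sym2.mem_iff_exists.mp (h0 ⟨0, by omega⟩)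
  rw [hy, Sym2.mem_iff] at hb hc
  rcases hb with hb | hb
  · exact absurd (congrArg Fin.val hb) (by simp)
  rcases hc with hc | hc
  · exact absurd (congrArg Fin.val hc) (by simp)
  rw [← hc] at hb
  exact absurd (congrArg Fin.val hb) (by simp)
end

section
/- For n = 2k+1 teams (n ≥ 3), in any schedule with guaranteed rest time k-1, every game after position k is played between the unique team not appearing in the previous k games and one of the two teams that played exactly k games earlier. -/
/-!
A rest time of `k - 1` forces any `k` consecutive games to be pairwise disjoint, so they
involve exactly `2k` of the `2k+1` teams and leave out a unique team `t`. Both teams of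
game `i` are absent from the `k - 1` games before it, so each of them is either `t` or a
team of game `i - k`. They cannot both play in game `i - k`, since that game would then be
a repeat of game `i`; hence game `i` is `t` against a team of game `i - k`.
-/

open Finset

theorem hasRest.notMem_of_le_add {n N b : ℕ} {f : ℕ → Sym2 (Fin n)} (hrest : hasRest n N f b)
    {t : Fin n} {i j : ℕ} (hij : i < j) (hjN : j < N) (hjb : j ≤ i + b) (hi : t ∈ f i) :
    t ∉ f j := by
  intro hj
  have hb := hrest t i j hij hjN hi hj
  have : #((Ioo i j).filter fun l => t ∉ f l) ≤ j - i - 1 :=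
    (card_filter_le _ _).trans (Nat.card_Ioo i j).le
  omega

theorem card_biUnion_toFinset_Ico {n N m a : ℕ} {f : ℕ → Sym2 (Fin n)}
    (hdiag : ∀ i, i < N → ¬ (f i).IsDiag) (hrest : hasRest n N f (m - 1)) (haN : a + m ≤ N) :
    #((Ico a (a + m)).biUnion fun l => (f l).toFinset) = 2 * m := by
  rw [card_biUnion]
  · rw [sum_congr rfl fun l hl => Sym2.card_toFinset_of_not_isDiag _
      (hdiag l (by rw [mem_Ico] at hl; omega))]
    simp [mul_comm]
  · intro j hj j' hj' hne
    simp only [coe_Ico, Set.mem_Ico] at hj hj'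
    rw [Function.onFun, disjoint_left]
    intro t ht ht'
    rw [Sym2.mem_toFinset] at ht ht'
    rcases hne.lt_or_gt with h | h
    · exact hrest.notMem_of_le_add h (by omega) (by omega) ht ht'
    · exact hrest.notMem_of_le_add h (by omega) (by omega) ht' ht

theorem existsUnique_notMem_of_hasRest {k N a : ℕ} {f : ℕ → Sym2 (Fin (2 * k + 1))}
    (hdiag : ∀ i, i < N → ¬ (f i).IsDiag) (hrest : hasRest (2 * k + 1) N f (k - 1))
    (haN : a + k ≤ N) :
    ∃! t : Fin (2 * k + 1), ∀ l, a ≤ l → l < a + k → t ∉ f l := by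
  set S := (Ico a (a + k)).biUnion fun l => (f l).toFinset
  have hS : #Sᶜ = 1 := by
    rw [card_compl, card_biUnion_toFinset_Ico hdiag hrest haN, Fintype.card_fin]
    omega
  obtain ⟨t, ht⟩ := card_eq_one.mp hS
  have habsent : ∀ u, (∀ l, a ≤ l → l < a + k → u ∉ f l) ↔ u ∈ Sᶜ := by
    intro u
    simp [S, Sym2.mem_toFinset]
  refine ⟨t, (habsent t).mpr (by simp [ht]), fun u hu => ?_⟩
  simpa [ht] using (habsent u).mp hu

theorem Sym2.exists_eq_mk_of_forall_ne_mem {α : Type*} {z w : Sym2 α} {t : α}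
    (hz : ¬ z.IsDiag) (hzw : z ≠ w) (h : ∀ u ∈ z, u ≠ t → u ∈ w) :
    ∃ u, z = s(t, u) ∧ u ∈ w := by
  induction z using Sym2.inductionOn with
  | hf x y =>
    rw [Sym2.mk_isDiag_iff] at hz
    by_cases hx : x = t
    · subst hx
      exact ⟨y, rfl, h y (Sym2.mem_mk_right x y) (Ne.symm hz)⟩
    by_cases hy : y = t
    · subst hy
      exact ⟨x, Sym2.eq_swap, h x (Sym2.mem_mk_left x y) hz⟩
    exact absurd ((Sym2.mem_and_mem_iff hz).mp
      ⟨h x (Sym2.mem_mk_left x y) hx, h y (Sym2.mem_mk_right x y) hy⟩).symm hzw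

theorem stmt3_general (k : ℕ) (f : ℕ → Sym2 (Fin (2*k+1)))
    (hf : isSchedule (2*k+1) ((2*k+1)*(2*k)/2) f)
    (hrest : hasRest (2*k+1) ((2*k+1)*(2*k)/2) f (k-1)) :
    ∀ i, k ≤ i → i < ((2*k+1)*(2*k)/2) →
      ∃ t u : Fin (2*k+1), f i = Sym2.mk t u ∧
        (∀ l, i - k ≤ l → l < i → t ∉ f l) ∧
        (∀ t' : Fin (2*k+1), (∀ l, i - k ≤ l → l < i → t' ∉ f l) → t' = t) ∧
        u ∈ f (i - k) := by
  obtain ⟨hdiag, hunique⟩ := hf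
  intro i hki hiN
  have hk : 0 < k := Nat.pos_of_ne_zero (by rintro rfl; simp at hiN)
  obtain ⟨t, ht_absent, ht_unique⟩ :=
    existsUnique_notMem_of_hasRest hdiag hrest (a := i - k) (by omega)
  rw [Nat.sub_add_cancel hki] at ht_absent ht_unique
  have h_other : ∀ u ∈ f i, u ≠ t → u ∈ f (i - k) := by
    intro u hu hut
    by_contra hu'
    refine hut (ht_unique u fun l hl hli => ?_)
    rcases hl.eq_or_lt with rfl | hl
    · exact hu'
    · exact fun hul => hrest.notMem_of_le_add hli hiN (by omega) hul hu
  have h_repeat : f i ≠ f (i - k) := fun h => by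
    have := (hunique (f i) (hdiag i hiN)).unique ⟨hiN, rfl⟩ ⟨by omega, h.symm⟩
    omega
  obtain ⟨u, hu, hu_prev⟩ := Sym2.exists_eq_mk_of_forall_ne_mem (hdiag i hiN) h_repeat h_other
  exact ⟨t, u, hu, ht_absent, ht_unique, hu_prev⟩

/-- For `n = 2k+1` teams, in any schedule with guaranteed rest time `k-1`, every game
after position `k` is played between the unique team not appearing in the previous `k`
games and one of the two teams that played exactly `k` games earlier. -/
theorem stmt3 (k : ℕ) (hk : 1 ≤ k) (f : ℕ → Sym2 (Fin (2*k+1)))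
    (hf : isSchedule (2*k+1) ((2*k+1)*(2*k)/2) f)
    (hrest : hasRest (2*k+1) ((2*k+1)*(2*k)/2) f (k-1)) :
    ∀ i, k ≤ i → i < ((2*k+1)*(2*k)/2) →
      ∃ t u : Fin (2*k+1), f i = Sym2.mk t u ∧
        (∀ l, i - k ≤ l → l < i → t ∉ f l) ∧
        (∀ t' : Fin (2*k+1), (∀ l, i - k ≤ l → l < i → t' ∉ f l) → t' = t) ∧
        u ∈ f (i - k) :=
  stmt3_general k f hf hrest
end

section
/- For n = 2k+1 teams (n ≥ 3), any schedule with guaranteed rest time k-1 has rest difference index 1: for every game, the numbers of games each of its two participants has rested since their respective previous games (with an imaginary game for all teams at position 0) differ by at most 1. -/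
/-- Any non-diagonal `Sym2` has two distinct members. -/
lemma sym2_exists_pair {α : Type*} (p : Sym2 α) (h : ¬ p.IsDiag) :
    ∃ x y, x ≠ y ∧ x ∈ p ∧ y ∈ p := by
  induction p using Sym2.ind with
  | _ x y =>
    refine ⟨x, y, ?_, Sym2.mem_mk_left _ _, Sym2.mem_mk_right _ _⟩
    intro e; exact h (by simp [e])

/-- If a team is absent from `k+1` consecutive slots `[a, a+k]`, contradiction. -/
lemma window (k N : ℕ) (hk : 1 ≤ k) (f : ℕ → Sym2 (Fin (2*k+1)))
    (hdiag : ∀ i, i < N → ¬ (f i).IsDiag)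
    (huniq : ∀ p : Sym2 (Fin (2*k+1)), ¬ p.IsDiag → ∃! i, i < N ∧ f i = p)
    (hspace : ∀ t : Fin (2*k+1), ∀ a b, a < b → b < N → t ∈ f a → t ∈ f b → a + k ≤ b)
    (t : Fin (2*k+1)) (a : ℕ) (haN : a + k < N)
    (habs : ∀ l, a ≤ l → l ≤ a + k → t ∉ f l) : False := by
  classical
  set W : Finset ℕ := Finset.Ico (a+1) (a+k+1) with hW
  have hWN : ∀ l ∈ W, l < N := by
    intro l hl; rw [hW, Finset.mem_Ico] at hl; omega
  set g : ℕ → Finset (Fin (2*k+1)) := fun l => Finset.univ.filter (· ∈ f l) with hg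
  have hcard2 : ∀ l, l < N → (g l).card = 2 := by
    intro l hl
    obtain ⟨x, y, hxy, hx, hy⟩ := sym2_exists_pair (f l) (hdiag l hl)
    have : g l = {x, y} := by
      ext u
      simp only [hg, Finset.mem_filter, Finset.mem_univ, true_and, Finset.mem_insert,
        Finset.mem_singleton]
      constructor
      · intro hu
        have := Sym2.mem_and_mem_iff hxy |>.mp ⟨hx, hy⟩
        rw [this, Sym2.mem_iff] at hu
        exact hu
      · rintro (rfl | rfl) <;> assumption
    rw [this, Finset.card_insert_of_notMem (by simpa using hxy), Finset.card_singleton]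
  have hdisj : ∀ l1 ∈ W, ∀ l2 ∈ W, l1 ≠ l2 → Disjoint (g l1) (g l2) := by
    intro l1 h1 l2 h2 hne
    rw [hW, Finset.mem_Ico] at h1 h2
    rw [Finset.disjoint_left]
    intro u hu1 hu2
    simp only [hg, Finset.mem_filter] at hu1 hu2
    rcases Nat.lt_or_ge l1 l2 with h | h
    · have := hspace u l1 l2 h (by omega) hu1.2 hu2.2; omega
    · have hlt : l2 < l1 := by omega
      have := hspace u l2 l1 hlt (by omega) hu2.2 hu1.2; omega
  set B : Finset (Fin (2*k+1)) := W.biUnion g with hB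
  have hBcard : B.card = 2*k := by
    rw [hB, Finset.card_biUnion hdisj]
    rw [Finset.sum_congr rfl (fun l hl => hcard2 l (hWN l hl))]
    simp [hW]; ring
  have hBsub : B ⊆ Finset.univ.erase t := by
    intro u hu
    rw [hB, Finset.mem_biUnion] at hu
    obtain ⟨l, hl, hul⟩ := hu
    rw [hg, Finset.mem_filter] at hul
    rw [Finset.mem_Ico] at hl
    refine Finset.mem_erase.mpr ⟨?_, Finset.mem_univ _⟩
    rintro rfl
    exact habs l (by omega) (by omega) hul.2
  have hBeq : B = Finset.univ.erase t := by
    apply Finset.eq_of_subset_of_card_le hBsub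
    rw [Finset.card_erase_of_mem (Finset.mem_univ _), Finset.card_univ, Fintype.card_fin, hBcard]
    omega
  -- the two teams of slot a
  obtain ⟨x, y, hxy, hx, hy⟩ := sym2_exists_pair (f a) (hdiag a (by omega))
  have hplay : ∀ u : Fin (2*k+1), u ∈ f a → u ∈ f (a + k) := by
    intro u hu
    have hut : u ≠ t := by rintro rfl; exact habs a le_rfl (by omega) hu
    have hub : u ∈ B := by rw [hBeq]; exact Finset.mem_erase.mpr ⟨hut, Finset.mem_univ _⟩
    rw [hB, Finset.mem_biUnion] at hub
    obtain ⟨l, hl, hul⟩ := hub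
    rw [Finset.mem_Ico] at hl
    rw [hg, Finset.mem_filter] at hul
    have := hspace u a l (by omega) (by omega) hu hul.2
    have : l = a + k := by omega
    exact this ▸ hul.2
  have heq : f (a + k) = f a := by
    have h1 := (Sym2.mem_and_mem_iff hxy).mp ⟨hplay x hx, hplay y hy⟩
    have h2 := (Sym2.mem_and_mem_iff hxy).mp ⟨hx, hy⟩
    rw [h1, h2]
  obtain ⟨i0, _, hiu⟩ := huniq (f a) (hdiag a (by omega))
  have e1 : a + k = i0 := hiu _ ⟨haN, heq⟩
  have e2 : a = i0 := hiu _ ⟨by omega, rfl⟩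
  omega

/-- For `n = 2k+1` teams, any schedule with guaranteed rest time `k-1` has rest
difference index (at most) `1`. -/
theorem stmt4 (k : ℕ) (hk : 1 ≤ k) (f : ℕ → Sym2 (Fin (2*k+1)))
    (hf : isSchedule (2*k+1) ((2*k+1)*(2*k)/2) f)
    (hrest : hasRest (2*k+1) ((2*k+1)*(2*k)/2) f (k-1)) :
    rdLe (2*k+1) ((2*k+1)*(2*k)/2) f 1 := by
  classical
  obtain ⟨hdiag, huniq⟩ := hf
  set N := (2*k+1)*(2*k)/2 with hN
  have hspace : ∀ t : Fin (2*k+1), ∀ a b, a < b → b < N → t ∈ f a → t ∈ f b → a + k ≤ b := by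
    intro t a b hab hbN ha hb
    have h1 := hrest t a b hab hbN ha hb
    have h2 : ((Finset.Ioo a b).filter (fun l => t ∉ f l)).card ≤ (Finset.Ioo a b).card :=
      Finset.card_filter_le _ _
    rw [Nat.card_Ioo] at h2
    omega
  intro i hi t1 t2 ht1 ht2
  -- upper bound: rest t1 i ≤ k
  have hupper : rest (2*k+1) f t1 i ≤ k := by
    have hsub : (Finset.range i).filter (fun j => ∀ l, j ≤ l → l < i → t1 ∉ f l)
        ⊆ Finset.Ico (i - k) i := by
      intro j hj
      rw [Finset.mem_filter, Finset.mem_range] at hj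
      rw [Finset.mem_Ico]
      refine ⟨?_, hj.1⟩
      by_contra hc
      push_neg at hc
      have hjk : j + k < i := by omega
      exact window k N hk f hdiag huniq hspace t1 j (by omega)
        (fun l hl1 hl2 => hj.2 l hl1 (by omega))
    calc rest (2*k+1) f t1 i ≤ (Finset.Ico (i - k) i).card := Finset.card_le_card hsub
    _ ≤ k := by rw [Nat.card_Ico]; omega
  -- lower bound on rest t2
  by_cases hprev : ∃ q, q < i ∧ t2 ∈ f q
  · -- t2 has a previous game
    set Q : Finset ℕ := (Finset.range i).filter (fun j => t2 ∈ f j) with hQ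
    have hQne : Q.Nonempty := by
      obtain ⟨q, hq1, hq2⟩ := hprev
      exact ⟨q, by rw [hQ, Finset.mem_filter, Finset.mem_range]; exact ⟨hq1, hq2⟩⟩
    set q := Q.max' hQne with hq
    have hqQ : q ∈ Q := Q.max'_mem hQne
    rw [hQ, Finset.mem_filter, Finset.mem_range] at hqQ
    have hmax : ∀ l, l < i → t2 ∈ f l → l ≤ q := by
      intro l hl hfl
      exact Q.le_max' l (by rw [hQ, Finset.mem_filter, Finset.mem_range]; exact ⟨hl, hfl⟩)
    have hqi : q + k ≤ i := hspace t2 q i hqQ.1 hi hqQ.2 ht2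
    have hlow : k - 1 ≤ rest (2*k+1) f t2 i := by
      have hsub : Finset.Ico (q+1) i ⊆
          (Finset.range i).filter (fun j => ∀ l, j ≤ l → l < i → t2 ∉ f l) := by
        intro j hj
        rw [Finset.mem_Ico] at hj
        rw [Finset.mem_filter, Finset.mem_range]
        refine ⟨hj.2, fun l hl1 hl2 hfl => ?_⟩
        have := hmax l hl2 hfl
        omega
      have := Finset.card_le_card hsub
      rw [Nat.card_Ico] at this
      unfold rest
      omega
    omega
  · -- first game of t2: rest t2 i = i, and rest t1 i ≤ i
    push_neg at hprev
    have ht2rest : rest (2*k+1) f t2 i = i := by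
      unfold rest
      rw [Finset.filter_true_of_mem, Finset.card_range]
      intro j hj l hl1 hl2
      exact hprev l hl2
    have : rest (2*k+1) f t1 i ≤ i := by
      unfold rest
      calc _ ≤ (Finset.range i).card := Finset.card_filter_le _ _
      _ = i := Finset.card_range i
    omega
end

section
/- For n = 2k+1 teams (n ≥ 3), in any schedule with guaranteed rest time k-1, every block of k+1 consecutive games involves all 2k+1 teams. -/
/-- For `n = 2k+1` teams, in any schedule with guaranteed rest time `k-1`, every block
of `k+1` consecutive games involves all `2k+1` teams. -/
theorem stmt5 (k : ℕ) (hk : 1 ≤ k) (f : ℕ → Sym2 (Fin (2*k+1)))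
    (hf : isSchedule (2*k+1) ((2*k+1)*(2*k)/2) f)
    (hrest : hasRest (2*k+1) ((2*k+1)*(2*k)/2) f (k-1)) :
    ∀ i, i + (k+1) ≤ ((2*k+1)*(2*k)/2) →
      ∀ t : Fin (2*k+1), ∃ l, i ≤ l ∧ l < i + (k+1) ∧ t ∈ f l := by

  intro i hi t
  by_contra hcon
  push_neg at hcon
  set N := (2*k+1)*(2*k)/2 with hN
  -- spacing lemma
  have hspace : ∀ s : Fin (2*k+1), ∀ a b, a < b → b < N → s ∈ f a → s ∈ f b → a + k ≤ b := by
    intro s a b hab hbN ha hb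
    have h1 := hrest s a b hab hbN ha hb
    have h2 : ((Finset.Ioo a b).filter (fun l => s ∉ f l)).card ≤ (Finset.Ioo a b).card :=
      Finset.card_filter_le _ _
    rw [Nat.card_Ioo] at h2
    omega
  set W := Finset.Ico i (i + (k+1)) with hW
  set c : Fin (2*k+1) → ℕ := fun s => (W.filter (fun l => s ∈ f l)).card with hc
  -- double counting
  have hsum : (∑ s : Fin (2*k+1), c s) = 2*(k+1) := by
    have h1 : (∑ s : Fin (2*k+1), c s)
        = ∑ l ∈ W, (Finset.univ.filter (fun s : Fin (2*k+1) => s ∈ f l)).card := by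
      simp only [hc, Finset.card_filter]
      rw [Finset.sum_comm]
    rw [h1]
    have hgame : ∀ l ∈ W, (Finset.univ.filter (fun s : Fin (2*k+1) => s ∈ f l)).card = 2 := by
      intro l hl
      rw [hW, Finset.mem_Ico] at hl
      have hnd : ¬ (f l).IsDiag := hf.1 l (by omega)
      obtain ⟨a, b, hab⟩ : ∃ a b, f l = s(a, b) := by
        induction (f l) using Sym2.ind with
        | _ x y => exact ⟨x, y, rfl⟩
      rw [hab] at hnd ⊢
      rw [Sym2.isDiag_iff_proj_eq] at hnd
      have : (Finset.univ.filter (fun s : Fin (2*k+1) => s ∈ s(a, b))) = {a, b} := by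
        ext x
        simp [Sym2.mem_iff]
      rw [this, Finset.card_pair hnd]
    rw [Finset.sum_congr rfl hgame, Finset.sum_const, hW, Nat.card_Ico]
    simp [Nat.mul_comm]
  have hct : c t = 0 := by
    rw [hc]
    simp only [Finset.card_eq_zero, Finset.filter_eq_empty_iff]
    intro l hl
    rw [hW, Finset.mem_Ico] at hl
    exact hcon l hl.1 hl.2
  -- any team with ≥ 2 games in the window plays at i and i+k, and at most twice
  have hkey : ∀ s : Fin (2*k+1), 2 ≤ c s → s ∈ f i ∧ s ∈ f (i+k) ∧ c s ≤ 2 := by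
    intro s hs
    obtain ⟨a, ha, b, hb, hab⟩ := Finset.one_lt_card.mp hs
    rw [Finset.mem_filter, hW, Finset.mem_Ico] at ha hb
    -- wlog a < b
    have hmain : ∀ a b : ℕ, (i ≤ a ∧ a < i + (k+1)) ∧ s ∈ f a →
        (i ≤ b ∧ b < i + (k+1)) ∧ s ∈ f b → a < b → a = i ∧ b = i + k := by
      intro a b ha hb hlt
      have := hspace s a b hlt (by omega) ha.2 hb.2
      omega
    have hik : s ∈ f i ∧ s ∈ f (i+k) := by
      rcases Nat.lt_or_ge a b with h | h
      · obtain ⟨rfl, rfl⟩ := hmain a b ha hb h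
        exact ⟨ha.2, hb.2⟩
      · have hlt : b < a := by omega
        obtain ⟨rfl, rfl⟩ := hmain b a hb ha hlt
        exact ⟨hb.2, ha.2⟩
    refine ⟨hik.1, hik.2, ?_⟩
    have hsub : W.filter (fun l => s ∈ f l) ⊆ {i, i + k} := by
      intro x hx
      rw [Finset.mem_filter, hW, Finset.mem_Ico] at hx
      simp only [Finset.mem_insert, Finset.mem_singleton]
      rcases Nat.eq_or_lt_of_le hx.1.1 with h | h
      · left; omega
      · right
        have := hspace s i x h (by omega) hik.1 hx.2
        omega
    calc c s ≤ ({i, i + k} : Finset ℕ).card := Finset.card_le_card hsub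
      _ ≤ 2 := Finset.card_insert_le _ _ |>.trans (by simp)
  -- at most one team plays twice
  have hE1 : ((Finset.univ.erase t).filter (fun s => 2 ≤ c s)).card ≤ 1 := by
    rw [Finset.card_le_one]
    intro s1 h1 s2 h2
    by_contra hne
    rw [Finset.mem_filter] at h1 h2
    have k1 := hkey s1 h1.2
    have k2 := hkey s2 h2.2
    have e1 : f i = s(s1, s2) := ((Sym2.mem_and_mem_iff hne).mp ⟨k1.1, k2.1⟩)
    have e2 : f (i+k) = s(s1, s2) := ((Sym2.mem_and_mem_iff hne).mp ⟨k1.2.1, k2.2.1⟩)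
    have hnd : ¬ (s(s1, s2) : Sym2 (Fin (2*k+1))).IsDiag := by
      rw [Sym2.isDiag_iff_proj_eq]; exact hne
    obtain ⟨j, _, hju⟩ := hf.2 _ hnd
    have q1 : i = j := hju i ⟨by omega, e1⟩
    have q2 : i + k = j := hju (i+k) ⟨by omega, e2⟩
    omega
  -- final counting
  have hsplit : (∑ s : Fin (2*k+1), c s) = (∑ s ∈ Finset.univ.erase t, c s) + c t :=
    (Finset.sum_erase_add _ _ (Finset.mem_univ t)).symm
  have hbound : (∑ s ∈ Finset.univ.erase t, c s)
      ≤ ((Finset.univ.erase t).filter (fun s => 2 ≤ c s)).card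
        + (Finset.univ.erase t).card := by
    rw [← Finset.sum_filter_add_sum_filter_not (Finset.univ.erase t) (fun s => 2 ≤ c s)]
    have b1 : (∑ s ∈ (Finset.univ.erase t).filter (fun s => 2 ≤ c s), c s)
        ≤ ((Finset.univ.erase t).filter (fun s => 2 ≤ c s)).card * 2 := by
      have := Finset.sum_le_card_nsmul ((Finset.univ.erase t).filter (fun s => 2 ≤ c s)) c 2
        (fun s hs => (hkey s (Finset.mem_filter.mp hs).2).2.2)
      simpa using this
    have b2 : (∑ s ∈ (Finset.univ.erase t).filter (fun s => ¬ 2 ≤ c s), c s)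
        ≤ ((Finset.univ.erase t).filter (fun s => ¬ 2 ≤ c s)).card * 1 := by
      have := Finset.sum_le_card_nsmul ((Finset.univ.erase t).filter (fun s => ¬ 2 ≤ c s)) c 1
        (fun s hs => by have := (Finset.mem_filter.mp hs).2; omega)
      simpa using this
    have b3 : ((Finset.univ.erase t).filter (fun s => 2 ≤ c s)).card
        + ((Finset.univ.erase t).filter (fun s => ¬ 2 ≤ c s)).card
        = (Finset.univ.erase t).card :=
      Finset.card_filter_add_card_filter_not _
    omega
  have hcard : (Finset.univ.erase t).card = 2*k := by
    rw [Finset.card_erase_of_mem (Finset.mem_univ t)]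
    simp
  omega
end

section
/- For even n = 2k with n ≥ 6, there is no schedule of a single round-robin tournament on n teams that simultaneously has guaranteed rest time k-2, games-played difference index 1, and rest difference index 1. -/
/-!
With games-played difference index `1`, the schedule splits into `2k - 1` rounds of `k`
consecutive games in which every team plays exactly once; let `σ_r t` be the slot of team `t`
in round `r`. Rest time `k - 2` gives `σ_r t ≤ σ_{r+1} t + 1`, and rest difference index `1`
puts the two opponents of a game of round `r + 1` into adjacent slots of round `r`. Inductively
from slot `0` upwards, the games of round `r + 1` then pair slots `2j` and `2j + 1` of round `r`,
and counting shows that the block `σ_r t / 2` never changes. But the teams of slots `0` and `2`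
of round `0` meet in some round, where they share a slot.
-/

open Finset

lemma eq_of_sum_eq_card_mul {ι : Type*} {s : Finset ι} {g : ι → ℕ} {r : ℕ}
    (hsum : ∑ i ∈ s, g i = #s * r) (hg : ∀ i ∈ s, ∀ j ∈ s, g i ≤ g j + 1) :
    ∀ i ∈ s, g i = r := by
  have hsum' : ∑ i ∈ s, g i = ∑ _i ∈ s, r := by rw [hsum, sum_const, smul_eq_mul]
  intro i hi
  rcases lt_trichotomy (g i) r with h | h | h
  · have hle : ∀ j ∈ s, g j ≤ r := fun j hj => by have := hg j hj i hi; omega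
    exact (sum_eq_sum_iff_of_le hle).1 hsum' i hi
  · exact h
  · have hle : ∀ j ∈ s, r ≤ g j := fun j hj => by have := hg i hi j hj; omega
    exact ((sum_eq_sum_iff_of_le hle).1 hsum'.symm i hi).symm

section Slotting

variable {α : Type*} [Fintype α] {k : ℕ} {σ τ : α → ℕ} {π : α → α}

/-- `σ t` is the slot of `t` among the `k` games of a round, each game holding two teams. -/
def IsSlotting (k : ℕ) (σ : α → ℕ) : Prop :=
  (∀ t, σ t < k) ∧ ∀ v < k, #{t | σ t = v} = 2

lemma IsSlotting.exists_eq (hσ : IsSlotting k σ) {v : ℕ} (hv : v < k) : ∃ t, σ t = v := by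
  obtain ⟨t, ht⟩ := card_pos.1 (by rw [hσ.2 v hv]; norm_num)
  exact ⟨t, (mem_filter.1 ht).2⟩

lemma IsSlotting.sum_comp (hσ : IsSlotting k σ) (g : ℕ → ℕ) :
    ∑ t, g (σ t) = 2 * ∑ v ∈ range k, g v := by
  rw [← sum_fiberwise_of_maps_to' (fun t _ => mem_range.2 (hσ.1 t)) g, mul_sum]
  refine sum_congr rfl fun v hv => ?_
  rw [sum_const, hσ.2 v (mem_range.1 hv), smul_eq_mul]

lemma IsSlotting.apply_eq_add_one_of_even (hσ : IsSlotting k σ) (hπ : Function.Involutive π)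
    (hadj : ∀ t, σ (π t) = σ t + 1 ∨ σ t = σ (π t) + 1) {t : α} (ht : Even (σ t)) :
    σ (π t) = σ t + 1 := by
  obtain ⟨j, hj⟩ := ht
  rw [← two_mul] at hj
  induction j generalizing t with
  | zero => rcases hadj t with h | h <;> omega
  | succ j ih =>
    rcases hadj t with h | h
    · exact h
    exfalso
    have hk : 2 * j + 1 < k := by have := hσ.1 t; omega
    -- `π` maps the two elements of slot `2j` into slot `2j+1`, hence onto it
    obtain ⟨a, ha, hat⟩ := surj_on_of_inj_on_of_card_le (s := {a | σ a = 2 * j})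
      (t := {b | σ b = 2 * j + 1}) (fun a _ => π a)
      (fun a ha => by simp only [mem_filter, mem_univ, true_and] at ha ⊢; have := ih ha; omega)
      (fun _ _ _ _ h => hπ.injective h)
      (by rw [hσ.2 _ hk, hσ.2 _ (by omega)]) (π t)
      (by simp only [mem_filter, mem_univ, true_and]; omega)
    obtain rfl := hπ.injective hat
    have := (mem_filter.1 ha).2
    omega

lemma IsSlotting.div_two_eq (hσ : IsSlotting k σ) (hτ : IsSlotting k τ)
    (hπ : Function.Involutive π) (hadj : ∀ t, σ (π t) = σ t + 1 ∨ σ t = σ (π t) + 1)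
    (hτπ : ∀ t, τ (π t) = τ t) (hστ : ∀ t, σ t ≤ τ t + 1) (t : α) : τ t / 2 = σ t / 2 := by
  have hle : ∀ t, σ t / 2 ≤ τ t / 2 := by
    intro t
    rcases Nat.even_or_odd (σ t) with h | h
    · have h1 := hσ.apply_eq_add_one_of_even hπ hadj h
      have h2 := hστ (π t)
      rw [hτπ] at h2
      omega
    · have := hστ t
      have := Nat.odd_iff.1 h
      omega
  -- both sums equal `2 * ∑ v < k, v / 2`
  have hsum : ∑ t, σ t / 2 = ∑ t, τ t / 2 := by
    rw [hσ.sum_comp (· / 2), hτ.sum_comp (· / 2)]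
  exact ((sum_eq_sum_iff_of_le fun t _ => hle t).1 hsum t (mem_univ t)).symm

end Slotting

section Schedule

variable {n N : ℕ} {f : ℕ → Sym2 (Fin n)}

lemma isSchedule.card_filter_mem_eq_two (hS : isSchedule n N f) {i : ℕ} (hi : i < N) :
    #{t | t ∈ f i} = 2 := by
  rw [← Sym2.card_toFinset_of_not_isDiag _ (hS.1 i hi)]
  congr 1
  ext t
  simp

lemma isSchedule.eq_of_mem_of_mem (hS : isSchedule n N f) {i j : ℕ} (hi : i < N) (hj : j < N)
    {t u : Fin n} (htu : t ≠ u) (hti : t ∈ f i) (hui : u ∈ f i) (htj : t ∈ f j)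
    (huj : u ∈ f j) : i = j := by
  have hd : ¬ (s(t, u) : Sym2 (Fin n)).IsDiag := Sym2.mk_isDiag_iff.not.2 htu
  exact (hS.2 _ hd).unique ⟨hi, (Sym2.mem_and_mem_iff htu).1 ⟨hti, hui⟩⟩
    ⟨hj, (Sym2.mem_and_mem_iff htu).1 ⟨htj, huj⟩⟩

lemma isSchedule.sum_played (hS : isSchedule n N f) {m : ℕ} (hm : m ≤ N) :
    ∑ t, played n f t m = 2 * m := by
  simp only [played, card_filter]
  rw [sum_comm]
  simp only [← card_filter]
  rw [sum_congr rfl fun i hi => hS.card_filter_mem_eq_two ((mem_range.1 hi).trans_le hm),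
    sum_const, card_range, smul_eq_mul, mul_comm]

lemma played_add (t : Fin n) (m l : ℕ) :
    played n f t (m + l) = played n f t m + #{j ∈ range l | t ∈ f (m + j)} := by
  simp only [played, card_filter, sum_range_add]

end Schedule

/-- The games `r*k, …, r*k + k - 1` form round `r`. -/
def PlaysOncePerRound {α : Type*} (k R : ℕ) (f : ℕ → Sym2 α) : Prop :=
  ∀ r < R, ∀ t, ∃! j, j < k ∧ t ∈ f (r * k + j)

lemma playsOncePerRound_of_gpLe {k R : ℕ} {f : ℕ → Sym2 (Fin (2 * k))}
    (hS : isSchedule (2 * k) (R * k) f) (hG : gpLe (2 * k) (R * k) f 1) :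
    PlaysOncePerRound k R f := by
  -- after `r` rounds the `2k` teams have played `2rk` games in total, at most one apart
  have hplayed : ∀ r ≤ R, ∀ t, played (2 * k) f t (r * k) = r := by
    intro r hr t
    have hm : r * k ≤ R * k := Nat.mul_le_mul_right k hr
    refine eq_of_sum_eq_card_mul (s := univ) ?_ (fun a _ b _ => hG _ hm a b) t (mem_univ t)
    rw [hS.sum_played hm, card_univ, Fintype.card_fin]
    ring
  intro r hr t
  have h := played_add (f := f) t (r * k) k
  rw [← add_one_mul, hplayed (r + 1) hr t, hplayed r hr.le t] at h
  have h1 : #{j ∈ range k | t ∈ f (r * k + j)} = 1 := by omega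
  simpa using card_eq_one_iff_existsUnique.1 h1

lemma round_index_lt {k R r j : ℕ} (hr : r < R) (hj : j < k) : r * k + j < R * k :=
  calc r * k + j < (r + 1) * k := by rw [add_one_mul]; omega
    _ ≤ R * k := Nat.mul_le_mul_right k hr

section Rounds

variable {α : Type*} {k R : ℕ} {f : ℕ → Sym2 α} {r : ℕ}

noncomputable def slot (k : ℕ) (f : ℕ → Sym2 α) (r : ℕ) (t : α) : ℕ :=
  sInf {j | j < k ∧ t ∈ f (r * k + j)}

open Classical in
noncomputable def partner (k : ℕ) (f : ℕ → Sym2 α) (r : ℕ) (t : α) : α :=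
  if h : t ∈ f (r * k + slot k f r t) then Sym2.Mem.other h else t

namespace PlaysOncePerRound

lemma slot_spec (hP : PlaysOncePerRound k R f) (hr : r < R) (t : α) :
    slot k f r t < k ∧ t ∈ f (r * k + slot k f r t) :=
  Nat.sInf_mem (hP r hr t).exists

lemma slot_eq (hP : PlaysOncePerRound k R f) (hr : r < R) {t : α} {j : ℕ} (hj : j < k)
    (ht : t ∈ f (r * k + j)) : slot k f r t = j :=
  (hP r hr t).unique (hP.slot_spec hr t) ⟨hj, ht⟩

lemma notMem_of_lt_of_lt (hP : PlaysOncePerRound k R f) (hr : r + 1 < R) {t : α} {l : ℕ}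
    (h1 : r * k + slot k f r t < l) (h2 : l < (r + 1) * k + slot k f (r + 1) t) : t ∉ f l := by
  have hk : (r + 1) * k = r * k + k := add_one_mul r k
  have hs := (hP.slot_spec (r := r + 1) hr t).1
  intro ht
  rcases lt_or_ge l (r * k + k) with hl | hl
  · have := hP.slot_eq (r := r) (by omega) (j := l - r * k) (by omega)
      (by rwa [Nat.add_sub_cancel' (by omega)])
    omega
  · have := hP.slot_eq hr (j := l - (r + 1) * k) (by omega)
      (by rwa [Nat.add_sub_cancel' (by omega)])
    omega

lemma partner_mem (hP : PlaysOncePerRound k R f) (hr : r < R) (t : α) :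
    partner k f r t ∈ f (r * k + slot k f r t) := by
  rw [partner, dif_pos (hP.slot_spec hr t).2]
  exact Sym2.other_mem _

lemma slot_partner (hP : PlaysOncePerRound k R f) (hr : r < R) (t : α) :
    slot k f r (partner k f r t) = slot k f r t :=
  hP.slot_eq hr (hP.slot_spec hr t).1 (hP.partner_mem hr t)

lemma partner_involutive (hP : PlaysOncePerRound k R f) (hr : r < R) :
    Function.Involutive (partner k f r) := by
  intro t
  have ht := (hP.slot_spec hr t).2
  conv_lhs => rw [partner, hP.slot_partner hr t, partner, dif_pos ht]
  rw [dif_pos (Sym2.other_mem ht)]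
  exact Sym2.other_invol ht _

end PlaysOncePerRound

end Rounds

namespace PlaysOncePerRound

variable {n k R : ℕ} {f : ℕ → Sym2 (Fin n)} {r : ℕ}

lemma isSlotting_slot (hS : isSchedule n (R * k) f) (hP : PlaysOncePerRound k R f)
    (hr : r < R) : IsSlotting k (slot k f r) := by
  refine ⟨fun t => (hP.slot_spec hr t).1, fun v hv => ?_⟩
  rw [← hS.card_filter_mem_eq_two (round_index_lt hr hv)]
  congr 1
  ext t
  simp only [mem_filter, mem_univ, true_and]
  exact ⟨fun h => h ▸ (hP.slot_spec hr t).2, hP.slot_eq hr hv⟩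

lemma partner_ne (hS : isSchedule n (R * k) f) (hP : PlaysOncePerRound k R f) (hr : r < R)
    (t : Fin n) : partner k f r t ≠ t := by
  obtain ⟨hs, ht⟩ := hP.slot_spec hr t
  rw [partner, dif_pos ht]
  exact Sym2.other_ne (hS.1 _ (round_index_lt hr hs)) ht

lemma rest_eq (hP : PlaysOncePerRound k R f) (hr : r + 1 < R) (t : Fin n) :
    rest n f t ((r + 1) * k + slot k f (r + 1) t)
      = k + slot k f (r + 1) t - slot k f r t - 1 := by
  have hk : (r + 1) * k = r * k + k := add_one_mul r k
  have hmem := (hP.slot_spec (r := r) (by omega) t).2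
  have hs := (hP.slot_spec (r := r) (by omega) t).1
  have hlast : {j ∈ range ((r + 1) * k + slot k f (r + 1) t) |
      ∀ l, j ≤ l → l < (r + 1) * k + slot k f (r + 1) t → t ∉ f l}
      = Ioo (r * k + slot k f r t) ((r + 1) * k + slot k f (r + 1) t) := by
    ext j
    simp only [mem_filter, mem_range, mem_Ioo]
    constructor
    · rintro ⟨hj, hfree⟩
      refine ⟨?_, hj⟩
      by_contra! hle
      exact hfree _ hle (by omega) hmem
    · rintro ⟨hj1, hj2⟩
      exact ⟨hj2, fun l hl1 hl2 => hP.notMem_of_lt_of_lt hr (by omega) hl2⟩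
  rw [rest, hlast, Nat.card_Ioo]
  omega

lemma slot_le_slot_succ_add_one (hP : PlaysOncePerRound k R f)
    (hR : hasRest n (R * k) f (k - 2)) (hr : r + 1 < R) (t : Fin n) :
    slot k f r t ≤ slot k f (r + 1) t + 1 := by
  have hk : (r + 1) * k = r * k + k := add_one_mul r k
  obtain ⟨hs, hmem⟩ := hP.slot_spec (r := r) (by omega) t
  obtain ⟨hs', hmem'⟩ := hP.slot_spec hr t
  have h := hR t _ _ (by omega) (round_index_lt hr hs') hmem hmem'
  rw [filter_true_of_mem fun l hl => hP.notMem_of_lt_of_lt hr (mem_Ioo.1 hl).1 (mem_Ioo.1 hl).2,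
    Nat.card_Ioo] at h
  omega

/-- Their rests differ by at most one, and the two teams cannot have met in round `r`. -/
lemma slot_partner_succ_adjacent (hS : isSchedule n (R * k) f) (hP : PlaysOncePerRound k R f)
    (hD : rdLe n (R * k) f 1) (hr : r + 1 < R) (t : Fin n) :
    slot k f r (partner k f (r + 1) t) = slot k f r t + 1 ∨
      slot k f r t = slot k f r (partner k f (r + 1) t) + 1 := by
  set u := partner k f (r + 1) t
  have hr' : r < R := by omega
  obtain ⟨hs, ht⟩ := hP.slot_spec hr t
  have hu := hP.partner_mem hr t
  have hut := hP.partner_ne hS hr t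
  have hslot := hP.slot_partner hr t
  have hi := round_index_lt hr hs
  have h1 := hD _ hi t u ht hu
  have h2 := hD _ hi u t hu ht
  have hru := hP.rest_eq hr u
  rw [hslot] at hru
  rw [hP.rest_eq hr t, hru] at h1 h2
  have hne : slot k f r u ≠ slot k f r t := by
    intro heq
    obtain ⟨hs₀, ht₀⟩ := hP.slot_spec hr' t
    have hu₀ := (hP.slot_spec hr' u).2
    rw [heq] at hu₀
    have := hS.eq_of_mem_of_mem (round_index_lt hr' hs₀) hi hut hu₀ ht₀ hu ht
    rw [add_one_mul] at this
    omega
  have := (hP.slot_spec hr' t).1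
  have := (hP.slot_spec hr' u).1
  omega

lemma slot_div_two_eq (hS : isSchedule n (R * k) f) (hP : PlaysOncePerRound k R f)
    (hR : hasRest n (R * k) f (k - 2)) (hD : rdLe n (R * k) f 1) (hr : r < R) (t : Fin n) :
    slot k f r t / 2 = slot k f 0 t / 2 := by
  induction r with
  | zero => rfl
  | succ r ih =>
    rw [← ih (by omega)]
    exact (hP.isSlotting_slot hS (by omega)).div_two_eq (hP.isSlotting_slot hS hr)
      (hP.partner_involutive hr) (hP.slot_partner_succ_adjacent hS hD hr)
      (hP.slot_partner hr) (hP.slot_le_slot_succ_add_one hR hr) t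

lemma exists_slot_eq (hS : isSchedule n (R * k) f) (hP : PlaysOncePerRound k R f)
    {t u : Fin n} (htu : t ≠ u) : ∃ r < R, slot k f r t = slot k f r u := by
  obtain ⟨i, ⟨hi, hfi⟩, -⟩ := hS.2 _ (Sym2.mk_isDiag_iff.not.2 htu)
  have hk : 0 < k := Nat.pos_of_ne_zero fun hk => by simp [hk] at hi
  have hr : i / k < R := (Nat.div_lt_iff_lt_mul hk).2 hi
  have hi' : i / k * k + i % k = i := Nat.div_add_mod' i k
  have hslot : ∀ v ∈ f i, slot k f (i / k) v = i % k := fun v hv =>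
    hP.slot_eq hr (Nat.mod_lt i hk) (by rwa [hi'])
  exact ⟨i / k, hr, by
    rw [hslot t (hfi ▸ Sym2.mem_mk_left t u), hslot u (hfi ▸ Sym2.mem_mk_right t u)]⟩

end PlaysOncePerRound

/-- For even `n = 2k ≥ 6`, no schedule simultaneously has guaranteed rest time exactly
`k-2`, games-played difference index exactly `1`, and rest difference index exactly `1`. -/
theorem stmt6 (k : ℕ) (hk : 3 ≤ k) :
    ¬ ∃ f : ℕ → Sym2 (Fin (2*k)), isSchedule (2*k) (2*k*(2*k-1)/2) f ∧
      (hasRest (2*k) (2*k*(2*k-1)/2) f (k-2) ∧ ¬ hasRest (2*k) (2*k*(2*k-1)/2) f (k-1)) ∧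
      (gpLe (2*k) (2*k*(2*k-1)/2) f 1 ∧ ¬ gpLe (2*k) (2*k*(2*k-1)/2) f 0) ∧
      (rdLe (2*k) (2*k*(2*k-1)/2) f 1 ∧ ¬ rdLe (2*k) (2*k*(2*k-1)/2) f 0) := by
  rintro ⟨f, hS, ⟨hR, -⟩, ⟨hG, -⟩, ⟨hD, -⟩⟩
  have hN : 2 * k * (2 * k - 1) / 2 = (2 * k - 1) * k := by
    rw [mul_assoc, Nat.mul_div_cancel_left _ two_pos, mul_comm]
  rw [hN] at hS hR hG hD
  have hP := playsOncePerRound_of_gpLe hS hG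
  have h0 := hP.isSlotting_slot hS (r := 0) (by omega)
  obtain ⟨t, ht⟩ := h0.exists_eq (v := 0) (by omega)
  obtain ⟨u, hu⟩ := h0.exists_eq (v := 2) (by omega)
  obtain ⟨r, hr, hmeet⟩ := hP.exists_slot_eq hS (t := t) (u := u) (by rintro rfl; omega)
  have h1 := hP.slot_div_two_eq hS hR hD hr t
  have h2 := hP.slot_div_two_eq hS hR hD hr u
  omega
end

section
/- For even n = 2k with n ≥ 4, the schedule generated by the circle design has guaranteed rest time exactly k-2. -/
/-- Circle design for `n = 2k` teams (0-indexed teams; team `t` is team `t+1` of the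
paper): team `0` is fixed at the top-left; the other `2k-1` teams occupy cyclic
positions `0, ..., 2k-2` (top-row columns `1..k-1` left to right, then bottom-row
columns `k-1` down to `0`), each rotating one step per round.
`circleTeamE k hk r c` is the team at cyclic position `c` in round `r`. -/
def circleTeamE (k : ℕ) (hk : 0 < k) (r c : ℕ) : Fin (2*k) :=
  ⟨(c + (2*k-1) - r % (2*k-1)) % (2*k-1) + 1, by
    have h := Nat.mod_lt (c + (2*k-1) - r % (2*k-1)) (y := 2*k-1) (by omega)
    omega⟩

/-- The `i`-th game (0-indexed) of the asynchronous circle-design schedule for `2k`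
teams: round `i / k`, column `i % k`, columns read left to right. -/
def circleGameE (k : ℕ) (hk : 0 < k) (i : ℕ) : Sym2 (Fin (2*k)) :=
  if i % k = 0 then s(⟨0, by omega⟩, circleTeamE k hk (i / k) (2*k-2))
  else s(circleTeamE k hk (i / k) (i % k - 1), circleTeamE k hk (i / k) (2*k-2 - i % k))

/-!
Every team plays exactly once per round: team `t` plays game `k * r + c`, where `c` is its
column in round `r`. The rotation moves a team at most one column to the left per round, so two
games of a team are at least `k - 1` positions apart, and the games strictly between a game of `t`
and its next one are all free of `t`. Team `k` (the paper's team `k + 1`) moves from column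
`k - 1` in round `0` to column `k - 2` in round `1`, so the bound `k - 2` is attained.
-/

theorem hasRest_iff_lt_sub {n N b : ℕ} {f : ℕ → Sym2 (Fin n)} :
    hasRest n N f b ↔
      ∀ t : Fin n, ∀ i j, i < j → j < N → t ∈ f i → t ∈ f j → b < j - i := by
  constructor
  · intro h t i j hij hjN hti htj
    have hb := (h t i j hij hjN hti htj).trans (Finset.card_filter_le _ _)
    rw [Nat.card_Ioo] at hb
    omega
  · intro h t i j hij hjN hti htj
    -- compare with the next game of `t` after game `i`
    have hnext : ∃ l, i < l ∧ t ∈ f l := ⟨j, hij, htj⟩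
    obtain ⟨hil, htl⟩ := Nat.find_spec hnext
    have hlj : Nat.find hnext ≤ j := Nat.find_min' hnext ⟨hij, htj⟩
    have hsub : Finset.Ioo i (Nat.find hnext) ⊆ (Finset.Ioo i j).filter (fun l => t ∉ f l) := by
      intro l hl
      rw [Finset.mem_Ioo] at hl
      rw [Finset.mem_filter, Finset.mem_Ioo]
      exact ⟨⟨hl.1, hl.2.trans_le hlj⟩,
        fun htl' => Nat.find_min hnext hl.2 ⟨hl.1, htl'⟩⟩
    have hgap := h t i _ hil (hlj.trans_lt hjN) hti htl
    have := Finset.card_le_card hsub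
    rw [Nat.card_Ioo] at this
    omega

theorem Nat.sub_add_mod_eq_iff {m s a c : ℕ} (hs : s ≤ m) (ha : a < m) (hc : c < m) :
    (c + m - s) % m = a ↔ c = (a + s) % m := by
  calc (c + m - s) % m = a ↔ c + m - s ≡ a [MOD m] := by rw [Nat.ModEq, Nat.mod_eq_of_lt ha]
    _ ↔ c + m ≡ a + s [MOD m] := by
      constructor
      · intro h; simpa [Nat.sub_add_cancel (by omega : s ≤ c + m)] using h.add_right s
      · intro h
        exact Nat.ModEq.add_right_cancel' s (by rwa [Nat.sub_add_cancel (by omega : s ≤ c + m)])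
    _ ↔ c ≡ a + s [MOD m] := by rw [Nat.ModEq, Nat.ModEq, Nat.add_mod_right]
    _ ↔ c = (a + s) % m := by rw [Nat.ModEq, Nat.mod_eq_of_lt hc]

namespace CircleDesign

/-- Cyclic position of team `t` in round `r`; meaningless for the fixed team `0`. -/
def pos (k : ℕ) (t : Fin (2*k)) (r : ℕ) : ℕ := (t.val - 1 + r) % (2*k-1)

def column (k p : ℕ) : ℕ := if p = 2*k-2 then 0 else if p ≤ k-2 then p+1 else 2*k-2-p

def teamColumn (k : ℕ) (t : Fin (2*k)) (r : ℕ) : ℕ :=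
  if t.val = 0 then 0 else column k (pos k t r)

theorem pos_lt (k : ℕ) (hk : 0 < k) (t : Fin (2*k)) (r : ℕ) : pos k t r < 2*k-1 :=
  Nat.mod_lt _ (by omega)

theorem circleTeamE_eq_iff {k : ℕ} (hk : 0 < k) {r c : ℕ} (hc : c < 2*k-1) {t : Fin (2*k)}
    (ht : t.val ≠ 0) : circleTeamE k hk r c = t ↔ c = pos k t r := by
  have hm : 0 < 2*k-1 := by omega
  rw [pos, ← Nat.add_mod_mod, ← Nat.sub_add_mod_eq_iff (Nat.mod_lt r hm).le (by omega) hc,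
    Fin.ext_iff]
  change (c + (2*k-1) - r % (2*k-1)) % (2*k-1) + 1 = t.val ↔ _
  omega

theorem mem_circleGameE_iff {k : ℕ} (hk : 0 < k) {t : Fin (2*k)} {i : ℕ} :
    t ∈ circleGameE k hk i ↔ i % k = teamColumn k t (i / k) := by
  have hik : i % k < k := Nat.mod_lt _ hk
  have hp := pos_lt k hk t (i / k)
  have hteam : ∀ c, 0 < (circleTeamE k hk (i / k) c).val := fun c => Nat.succ_pos _
  unfold circleGameE teamColumn
  by_cases ht : t.val = 0
  · split_ifs with h <;> simp only [Sym2.mem_iff, Fin.ext_iff, ht] <;> grind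
  · have hne : t ≠ ⟨0, by omega⟩ := fun h => ht (congrArg Fin.val h)
    rw [if_neg ht]
    by_cases h : i % k = 0
    · rw [if_pos h, Sym2.mem_iff, eq_comm (b := circleTeamE _ _ _ _),
        circleTeamE_eq_iff hk (by omega) ht]
      simp only [hne, false_or]
      unfold column
      split_ifs <;> omega
    · rw [if_neg h, Sym2.mem_iff, eq_comm (b := circleTeamE _ _ _ (i % k - 1)),
        eq_comm (b := circleTeamE _ _ _ (2*k-2 - i % k)), circleTeamE_eq_iff hk (by omega) ht,
        circleTeamE_eq_iff hk (by omega) ht]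
      unfold column
      split_ifs <;> omega

theorem teamColumn_lt {k : ℕ} (hk : 0 < k) (t : Fin (2*k)) (r : ℕ) : teamColumn k t r < k := by
  unfold teamColumn column
  split_ifs <;> omega

theorem teamColumn_le_succ {k : ℕ} (hk : 0 < k) (t : Fin (2*k)) (r : ℕ) :
    teamColumn k t r ≤ teamColumn k t (r + 1) + 1 := by
  have hm : 0 < 2*k-1 := by omega
  have hsucc : pos k t (r + 1) = (pos k t r + 1) % (2*k-1) := by
    rw [pos, pos, Nat.mod_add_mod, Nat.add_assoc]
  have hp := pos_lt k hk t r
  unfold teamColumn column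
  rw [hsucc]
  rcases Nat.lt_or_ge (pos k t r + 1) (2*k-1) with h | h
  · rw [Nat.mod_eq_of_lt h]; split_ifs <;> omega
  · rw [show pos k t r + 1 = 2*k-1 by omega, Nat.mod_self]; split_ifs <;> omega

theorem lt_sub_of_mem_circleGameE {k : ℕ} (hk : 0 < k) {t : Fin (2*k)} {i j : ℕ} (hij : i < j)
    (hti : t ∈ circleGameE k hk i) (htj : t ∈ circleGameE k hk j) : k - 2 < j - i := by
  rw [mem_circleGameE_iff] at hti htj
  have hi := Nat.div_add_mod i k
  have hj := Nat.div_add_mod j k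
  have hr : i / k ≤ j / k := Nat.div_le_div_right hij.le
  have hcol := teamColumn_lt hk t (i / k)
  rcases hr.eq_or_lt with heq | hlt
  · rw [heq] at hti hi
    omega
  · obtain ⟨d, hd⟩ := Nat.exists_eq_add_of_lt hlt
    rw [hd] at htj hj
    rw [Nat.mul_add, Nat.mul_add, Nat.mul_one] at hj
    rcases Nat.eq_zero_or_pos d with rfl | hd0
    · have := teamColumn_le_succ hk t (i / k)
      simp only [Nat.mul_zero, Nat.add_zero] at htj hj
      omega
    · have := Nat.le_mul_of_pos_right k hd0
      omega

theorem exists_mem_circleGameE_sub_one_and_two_mul_sub_two {k : ℕ} (hk : 2 ≤ k) :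
    ∃ t : Fin (2*k), t ∈ circleGameE k (Nat.zero_lt_of_lt hk) (k - 1) ∧
      t ∈ circleGameE k (Nat.zero_lt_of_lt hk) (2*k - 2) := by
  have hdiv : (2*k - 2) / k = 1 := Nat.div_eq_of_lt_le (by omega) (by omega)
  have hmod : (2*k - 2) % k = k - 2 := by
    have := Nat.div_add_mod (2*k - 2) k
    rw [hdiv] at this
    omega
  refine ⟨⟨k, by omega⟩, ?_, ?_⟩ <;> rw [mem_circleGameE_iff] <;>
    unfold teamColumn column pos <;> dsimp only
  · rw [Nat.mod_eq_of_lt (by omega : k - 1 < k), Nat.div_eq_of_lt (by omega : k - 1 < k),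
      Nat.mod_eq_of_lt (by omega : k - 1 + 0 < 2*k-1)]
    split_ifs <;> omega
  · rw [hdiv, hmod, Nat.mod_eq_of_lt (by omega : k - 1 + 1 < 2*k-1)]
    split_ifs <;> omega

end CircleDesign

/-- For even `n = 2k ≥ 4`, the circle-design schedule has guaranteed rest time exactly
`k-2`. -/
theorem stmt9 (k : ℕ) (hk : 2 ≤ k) :
    hasRest (2*k) (2*k*(2*k-1)/2) (circleGameE k (by omega)) (k-2) ∧
    ¬ hasRest (2*k) (2*k*(2*k-1)/2) (circleGameE k (by omega)) (k-1) := by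
  have hN : 2*k - 2 < 2*k*(2*k-1)/2 := by
    rw [Nat.mul_assoc, Nat.mul_div_cancel_left _ two_pos]
    have := Nat.mul_le_mul_right (2*k - 1) hk
    omega
  rw [hasRest_iff_lt_sub, hasRest_iff_lt_sub]
  refine ⟨fun t i j hij _ hti htj => CircleDesign.lt_sub_of_mem_circleGameE _ hij hti htj,
    fun h => ?_⟩
  obtain ⟨t, ht₁, ht₂⟩ := CircleDesign.exists_mem_circleGameE_sub_one_and_two_mul_sub_two hk
  have := h t (k - 1) (2*k - 2) (by omega) hN ht₁ ht₂
  omega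
end

section
/- For odd n = 2k+1 with n ≥ 5, the schedule generated by the circle design (with a dummy team giving byes) has guaranteed rest time exactly k-2. -/
/-- Circle design for odd `n = 2k+1` teams `0, ..., 2k` (team `t` is team `t+1` of the
paper): a dummy team is fixed at the top-left; the `2k+1` real teams occupy cyclic
positions `0, ..., 2k` (top-row columns `1..k` left to right, then bottom-row columns
`k` down to `0`), each rotating one step per round; the team at cyclic position `2k`
(below the dummy) sits out the round. -/
def circleTeamO (k : ℕ) (r c : ℕ) : Fin (2*k+1) :=
  ⟨(c + (2*k+1) - r % (2*k+1)) % (2*k+1), Nat.mod_lt _ (by omega)⟩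

/-- The `i`-th game (0-indexed) of the asynchronous circle-design schedule for `2k+1`
teams: round `i / k`, column `i % k + 1`, columns read left to right. -/
def circleGameO (k : ℕ) (i : ℕ) : Sym2 (Fin (2*k+1)) :=
  s(circleTeamO k (i / k) (i % k), circleTeamO k (i / k) (2*k - 1 - i % k))

/-
A team at cyclic position `p < 2k` plays in column `min p (2k-1-p)` of its round (position `2k`
sits out), and moves to position `p + 1` in the next round. So from one game of a team to its
next, in the following round, the column drops by at most one, which leaves at least `k - 2`
games of other teams in between. The bound is attained by the team moving from position `k`
(column `k - 1`) to position `k + 1` (column `k - 2`).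
-/

section Rest

variable {n : ℕ} {f : ℕ → Sym2 (Fin n)}

theorem hasRest_of_forall_lt_sub {N b : ℕ}
    (h : ∀ t i j, i < j → t ∈ f i → t ∈ f j → b < j - i) : hasRest n N f b := by
  intro t i j hij _ hti htj
  have hnext : ∃ l, i < l ∧ t ∈ f l := ⟨j, hij, htj⟩
  obtain ⟨hil, htl⟩ := Nat.find_spec hnext
  have hlj : Nat.find hnext ≤ j := Nat.find_min' hnext ⟨hij, htj⟩
  have hsub : Finset.Ioo i (Nat.find hnext) ⊆ (Finset.Ioo i j).filter (fun l => t ∉ f l) := by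
    intro l hl
    rw [Finset.mem_Ioo] at hl
    exact Finset.mem_filter.2
      ⟨Finset.mem_Ioo.2 ⟨hl.1, hl.2.trans_le hlj⟩, fun htl' => Nat.find_min hnext hl.2 ⟨hl.1, htl'⟩⟩
  have := Finset.card_le_card hsub
  have := h t i _ hil hti htl
  rw [Nat.card_Ioo] at *
  omega

theorem not_hasRest_of_mem_of_mem {N b : ℕ} {t : Fin n} {i j : ℕ} (hij : i < j) (hjN : j < N)
    (hti : t ∈ f i) (htj : t ∈ f j) (hb : j - i ≤ b) : ¬ hasRest n N f b := fun h => by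
  have hrest := h t i j hij hjN hti htj
  have := Finset.card_filter_le (Finset.Ioo i j) (fun l => t ∉ f l)
  rw [Nat.card_Ioo] at this
  omega

end Rest

section Circle

open Fin.NatCast

variable {k : ℕ}

theorem circleTeamO_eq_sub (r : ℕ) {c : ℕ} (hc : c < 2*k+1) :
    circleTeamO k r c = (c : Fin (2*k+1)) - (r : Fin (2*k+1)) := by
  ext
  rw [Fin.val_sub, Fin.val_natCast, Fin.val_natCast, Nat.mod_eq_of_lt hc]
  have := Nat.mod_lt r (show 0 < 2*k+1 by omega)
  exact congrArg (· % (2*k+1)) (by omega)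

/-- The cyclic position of team `t` in round `r`. -/
def circlePos (k : ℕ) (t : Fin (2*k+1)) (r : ℕ) : Fin (2*k+1) :=
  t + (r : Fin (2*k+1))

theorem mem_circleGameO_iff (t : Fin (2*k+1)) (r : ℕ) {c : ℕ} (hc : c < k) :
    t ∈ circleGameO k (k*r + c) ↔
      (circlePos k t r : ℕ) = c ∨ (circlePos k t r : ℕ) = 2*k - 1 - c := by
  have hk : 0 < k := by omega
  have hpos : ∀ d < 2*k+1,
      t = (d : Fin (2*k+1)) - (r : Fin (2*k+1)) ↔ (circlePos k t r : ℕ) = d := fun d hd => by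
    rw [circlePos, eq_sub_iff_add_eq, Fin.ext_iff, Fin.val_natCast, Nat.mod_eq_of_lt hd]
  rw [circleGameO, Nat.mul_add_div hk, Nat.div_eq_of_lt hc, Nat.mul_add_mod_self_left,
    Nat.mod_eq_of_lt hc, add_zero, Sym2.mem_iff, circleTeamO_eq_sub _ (by omega),
    circleTeamO_eq_sub _ (by omega), hpos _ (by omega), hpos _ (by omega)]

theorem val_circlePos_succ (t : Fin (2*k+1)) (r : ℕ) :
    (circlePos k t (r + 1) : ℕ) =
      if (circlePos k t r : ℕ) = 2*k then 0 else (circlePos k t r : ℕ) + 1 := by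
  rw [circlePos, circlePos, Nat.cast_succ, ← add_assoc, Fin.val_add_one]
  simp only [Fin.ext_iff, Fin.val_last]

theorem le_sub_of_mem_circleGameO {t : Fin (2*k+1)} {i j : ℕ} (hij : i < j)
    (hti : t ∈ circleGameO k i) (htj : t ∈ circleGameO k j) : k - 1 ≤ j - i := by
  rcases Nat.eq_zero_or_pos k with rfl | hk
  · omega
  obtain ⟨r, c, hc, rfl⟩ : ∃ r c, c < k ∧ k*r + c = i :=
    ⟨i / k, i % k, Nat.mod_lt _ hk, Nat.div_add_mod i k⟩
  obtain ⟨r', c', hc', rfl⟩ : ∃ r c, c < k ∧ k*r + c = j :=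
    ⟨j / k, j % k, Nat.mod_lt _ hk, Nat.div_add_mod j k⟩
  rw [mem_circleGameO_iff _ _ hc] at hti
  rw [mem_circleGameO_iff _ _ hc'] at htj
  have hrr' : r ≤ r' := by
    by_contra! h
    have := Nat.mul_le_mul_left k h
    rw [Nat.mul_succ] at this
    omega
  rcases Nat.lt_or_ge r' (r + 2) with hr' | hr'
  · obtain rfl | rfl : r' = r ∨ r' = r + 1 := by omega
    · omega
    · rw [val_circlePos_succ] at htj
      rw [Nat.mul_succ]
      split_ifs at htj <;> omega
  · have := Nat.mul_le_mul_left k hr'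
    rw [Nat.mul_add] at this
    omega

end Circle

/-- For odd `n = 2k+1 ≥ 5`, the circle-design schedule (with a dummy team giving byes)
has guaranteed rest time exactly `k-2`. -/
theorem stmt12 (k : ℕ) (hk : 2 ≤ k) :
    hasRest (2*k+1) ((2*k+1)*(2*k)/2) (circleGameO k) (k-2) ∧
    ¬ hasRest (2*k+1) ((2*k+1)*(2*k)/2) (circleGameO k) (k-1) := by
  refine ⟨hasRest_of_forall_lt_sub fun t i j hij hti htj => ?_, ?_⟩
  · have := le_sub_of_mem_circleGameO hij hti htj
    omega
  · have hpos : ∀ r < 2*k+1, (circlePos k 0 r : ℕ) = r := fun r hr => by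
      rw [circlePos, zero_add, Fin.val_natCast, Nat.mod_eq_of_lt hr]
    have hround : (0 : Fin (2*k+1)) ∈ circleGameO k (k*k + (k-1)) :=
      (mem_circleGameO_iff _ _ (by omega)).2 (Or.inr (by rw [hpos _ (by omega)]; omega))
    have hround_succ : (0 : Fin (2*k+1)) ∈ circleGameO k (k*(k+1) + (k-2)) :=
      (mem_circleGameO_iff _ _ (by omega)).2 (Or.inr (by rw [hpos _ (by omega)]; omega))
    have hN : (2*k+1)*(2*k)/2 = 2*(k*k) + k := Nat.div_eq_of_eq_mul_left two_pos (by ring)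
    have hkk : k ≤ k*k := Nat.le_mul_self k
    exact not_hasRest_of_mem_of_mem (by rw [Nat.mul_succ]; omega)
      (by rw [hN, Nat.mul_succ]; omega) hround hround_succ (by rw [Nat.mul_succ]; omega)
end

section
/- For odd n = 2k+1 with n ≥ 3, there exists a schedule of the single round-robin tournament on n teams with guaranteed rest time k-1, games-played difference index 1, and rest difference index 1. -/
/-!
For `n = 2k+1`, the complete graph on `ℤ/2k ∪ {∞}` splits into the `k` Hamiltonian cycles
`∞, q, q+1, q-1, q+2, q-2, …` (Walecki). Block `q` of the schedule runs twice around cycle `q`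
with step two, listing its edges `{v₀,v₁}, {v₂,v₃}, …, {v_{2k},v₀}, {v₁,v₂}, …`. Then every team
plays twice per block, at slots `first ≤ k ≤ second` with `second - first ∈ {k, k+1}`, and passing
to the next block also keeps the gap in `{k, k+1}`.

The three indices only depend on the increasing list of positions of each team's games. Gaps of at
least `k` give rest time `k-1`. Every rest is `k-1` or `k`, except at first games; these all lie in
the first `k+1` slots and have rest equal to their position. Every team's `m`-th game comes no later
than every team's `(m+1)`-st game, so games-played counts never differ by more than one.
-/

open Finset

section General

variable {n N : ℕ} {f : ℕ → Sym2 (Fin n)}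

lemma rest_eq_self {t : Fin n} {i : ℕ} (h : ∀ l < i, t ∉ f l) : rest n f t i = i := by
  rw [rest, filter_true_of_mem fun j hj l _ hl => h l hl, card_range]

lemma rest_eq_sub {t : Fin n} {P i : ℕ} (hPi : P < i) (htP : t ∈ f P)
    (h : ∀ l, P < l → l < i → t ∉ f l) : rest n f t i = i - P - 1 := by
  have : (range i).filter (fun j => ∀ l, j ≤ l → l < i → t ∉ f l) = Ioo P i := by
    ext j
    simp only [mem_filter, mem_range, mem_Ioo]
    refine ⟨fun ⟨hj, hall⟩ => ⟨lt_of_not_ge fun hjP => hall P hjP hPi htP, hj⟩,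
      fun ⟨hPj, hj⟩ => ⟨hj, fun l hjl hli => h l (hPj.trans_le hjl) hli⟩⟩
  rw [rest, this, Nat.card_Ioo]

lemma not_gpLe_zero_of_mem_of_not_mem {t₁ t₂ : Fin n} (hN : 1 ≤ N) (h₁ : t₁ ∈ f 0)
    (h₂ : t₂ ∉ f 0) : ¬ gpLe n N f 0 := by
  intro h
  simpa [played, range_one, filter_singleton, h₁, h₂] using h 1 hN t₁ t₂

def IsGameEnum (n N : ℕ) (f : ℕ → Sym2 (Fin n)) (t : Fin n) (M : ℕ) (g : ℕ → ℕ) : Prop :=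
  StrictMono g ∧ ∀ i < N, (t ∈ f i ↔ ∃ m < M, g m = i)

namespace IsGameEnum

variable {t : Fin n} {M : ℕ} {g : ℕ → ℕ}

lemma mem (h : IsGameEnum n N f t M g) {m i : ℕ} (hm : m < M) (hgi : g m = i) (hN : i < N) :
    t ∈ f i :=
  (h.2 i hN).2 ⟨m, hm, hgi⟩

lemma exists_eq (h : IsGameEnum n N f t M g) {i : ℕ} (hi : i < N) (ht : t ∈ f i) :
    ∃ m < M, g m = i :=
  (h.2 i hi).1 ht

lemma not_mem_of_lt_zero (h : IsGameEnum n N f t M g) {l : ℕ} (hl : l < g 0) (hN : l < N) :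
    t ∉ f l := by
  intro ht
  obtain ⟨m, -, rfl⟩ := h.exists_eq hN ht
  exact absurd (h.1.lt_iff_lt.1 hl) (Nat.not_lt_zero m)

lemma not_mem_of_lt_of_lt (h : IsGameEnum n N f t M g) {m l : ℕ} (h₁ : g m < l)
    (h₂ : l < g (m + 1)) (hN : l < N) : t ∉ f l := by
  intro ht
  obtain ⟨m', -, rfl⟩ := h.exists_eq hN ht
  have := h.1.lt_iff_lt.1 h₁
  have := h.1.lt_iff_lt.1 h₂
  omega

lemma rest_zero (h : IsGameEnum n N f t M g) (hN : g 0 < N) : rest n f t (g 0) = g 0 :=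
  rest_eq_self fun _ hl => h.not_mem_of_lt_zero hl (hl.trans hN)

lemma rest_succ (h : IsGameEnum n N f t M g) {m : ℕ} (hm : m + 1 < M) (hN : g (m + 1) < N) :
    rest n f t (g (m + 1)) = g (m + 1) - g m - 1 :=
  rest_eq_sub (h.1 m.lt_add_one) (h.mem (by omega) rfl ((h.1 m.lt_add_one).trans hN))
    fun _ h₁ h₂ => h.not_mem_of_lt_of_lt h₁ h₂ (h₂.trans hN)

lemma played_eq (h : IsGameEnum n N f t M g) {i : ℕ} (hi : i ≤ N) :
    played n f t i = #{m ∈ range M | g m < i} := by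
  have : {l ∈ range i | t ∈ f l} = {m ∈ range M | g m < i}.image g := by
    ext l
    simp only [mem_filter, mem_range, mem_image]
    constructor
    · rintro ⟨hl, ht⟩
      obtain ⟨m, hm, rfl⟩ := h.exists_eq (hl.trans_le hi) ht
      exact ⟨m, ⟨hm, hl⟩, rfl⟩
    · rintro ⟨m, ⟨hm, hl⟩, rfl⟩
      exact ⟨hl, h.mem hm rfl (hl.trans_le hi)⟩
  rw [played, this, card_image_of_injective _ h.1.injective]

lemma rest_cases {k : ℕ} (h : IsGameEnum n N f t M g) (h₀ : g 0 ≤ k)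
    (hgap : ∀ m, m + 1 < M → g m + k ≤ g (m + 1) ∧ g (m + 1) ≤ g m + k + 1)
    {i : ℕ} (hi : i < N) (ht : t ∈ f i) :
    (k - 1 ≤ rest n f t i ∧ rest n f t i ≤ k ∧ rest n f t i ≤ i) ∨
      (rest n f t i = i ∧ i ≤ k) := by
  obtain ⟨_ | m, hm, rfl⟩ := h.exists_eq hi ht
  · exact Or.inr ⟨h.rest_zero hi, h₀⟩
  · rw [h.rest_succ hm hi]
    have := hgap m hm
    omega

end IsGameEnum

variable {M : ℕ} {g : Fin n → ℕ → ℕ}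

lemma hasRest_of_gap {b : ℕ} (hg : ∀ t, IsGameEnum n N f t M (g t))
    (hgap : ∀ t m, m + 1 < M → g t m + b < g t (m + 1)) : hasRest n N f b := by
  intro t i j hij hj hti htj
  obtain ⟨mi, hmi, rfl⟩ := (hg t).exists_eq (hij.trans hj) hti
  obtain ⟨_ | m, hmj, rfl⟩ := (hg t).exists_eq hj htj
  · exact absurd ((hg t).1.lt_iff_lt.1 hij) (Nat.not_lt_zero mi)
  have hmi_le : g t mi ≤ g t m := (hg t).1.monotone (by have := (hg t).1.lt_iff_lt.1 hij; omega)
  calc b ≤ #(Ioo (g t m) (g t (m + 1))) := by rw [Nat.card_Ioo]; have := hgap t m hmj; omega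
    _ ≤ _ := card_le_card fun l hl => by
      rw [mem_Ioo] at hl
      exact mem_filter.2 ⟨mem_Ioo.2 ⟨hmi_le.trans_lt hl.1, hl.2⟩,
        (hg t).not_mem_of_lt_of_lt hl.1 hl.2 (hl.2.trans hj)⟩

lemma rdLe_one_of_gap {k : ℕ} (hg : ∀ t, IsGameEnum n N f t M (g t)) (h₀ : ∀ t, g t 0 ≤ k)
    (hgap : ∀ t m, m + 1 < M → g t m + k ≤ g t (m + 1) ∧ g t (m + 1) ≤ g t m + k + 1) :
    rdLe n N f 1 := by
  intro i hi t₁ t₂ h₁ h₂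
  have := (hg t₁).rest_cases (h₀ t₁) (hgap t₁) hi h₁
  have := (hg t₂).rest_cases (h₀ t₂) (hgap t₂) hi h₂
  omega

lemma gpLe_one_of_interlace (hg : ∀ t, IsGameEnum n N f t M (g t))
    (hint : ∀ t t' m, m + 1 < M → g t' m ≤ g t (m + 1)) : gpLe n N f 1 := by
  intro i hi t₁ t₂
  rw [(hg t₁).played_eq hi, (hg t₂).played_eq hi]
  -- `m ↦ m - 1` sends the games of `t₁` before `i`, except its first, to games of `t₂` before `i`.
  set S := {m ∈ range M | g t₂ m < i}
  calc #{m ∈ range M | g t₁ m < i} ≤ #(insert 0 (S.image (fun m : ℕ => m + 1))) := card_le_card ?_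
    _ ≤ #(S.image (fun m : ℕ => m + 1)) + 1 := card_insert_le _ _
    _ ≤ #S + 1 := Nat.add_le_add_right card_image_le 1
  intro m hm
  simp only [mem_filter, mem_range] at hm
  rcases m with _ | m
  · exact mem_insert_self _ _
  · exact mem_insert_of_mem (mem_image.2 ⟨m, mem_filter.2 ⟨mem_range.2 (by omega),
      (hint t₁ t₂ m hm.1).trans_lt hm.2⟩, rfl⟩)

end General

namespace Walecki

-- `(q - t) mod 2k`: the position of `t` relative to `q` on the cycle `ℤ/2k`.
def offset (k q t : ℕ) : ℕ := (q + 2 * k - t) % (2 * k)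

def firstSlot (k q t : ℕ) : ℕ :=
  if t = 2 * k then 0 else if offset k q t < k then offset k q t else 2 * k - offset k q t

def secondSlot (k q t : ℕ) : ℕ :=
  if t = 2 * k then k else if offset k q t < k then offset k q t + k + 1 else 3 * k - offset k q t

-- With `v₀ = ∞ = 2k`, `v_{2j} = q + j` and `v_{2j+1} = q - j` (mod `2k`), slot `s` of block `q`
-- is the edge `{v_{2s}, v_{2s+1}}` (indices mod `2k+1`); `firstSlot` and `secondSlot` invert this.
def teamA (k q s : ℕ) : ℕ :=
  if s = 0 then 2 * k
  else if s ≤ k then q + s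
  else if s ≤ q + k + 1 then q + k + 1 - s else q + 3 * k + 1 - s

def teamB (k q s : ℕ) : ℕ :=
  if s = 0 then q
  else if s < k then (if s ≤ q then q - s else q + 2 * k - s)
  else if s = k then 2 * k
  else q + s - k

lemma offset_lt {k : ℕ} (hk : 1 ≤ k) (q t : ℕ) : offset k q t < 2 * k :=
  Nat.mod_lt _ (by omega)

lemma offset_add {k q t : ℕ} (hq : q < 2 * k) (ht : t ≤ 2 * k) :
    offset k q t + t = q ∨ offset k q t + t = q + 2 * k := by
  unfold offset
  by_cases htq : t ≤ q
  · left
    rw [show q + 2 * k - t = q - t + 2 * k by omega, Nat.add_mod_right, Nat.mod_eq_of_lt (by omega)]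
    omega
  · right
    rw [Nat.mod_eq_of_lt (by omega)]
    omega

lemma slots_bounds {k : ℕ} (hk : 1 ≤ k) (q t : ℕ) :
    firstSlot k q t ≤ k ∧ k ≤ secondSlot k q t ∧ secondSlot k q t ≤ 2 * k ∧
      (secondSlot k q t = firstSlot k q t + k ∨ secondSlot k q t = firstSlot k q t + k + 1) := by
  have := offset_lt hk q t
  unfold firstSlot secondSlot
  split_ifs <;> omega

lemma gap_across_blocks {k q t : ℕ} (hq : q + 1 < k) (ht : t ≤ 2 * k) :
    secondSlot k q t + k ≤ 2 * k + 1 + firstSlot k (q + 1) t ∧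
      2 * k + 1 + firstSlot k (q + 1) t ≤ secondSlot k q t + k + 1 := by
  have h₁ := offset_add (q := q) (by omega) ht
  have h₂ := offset_add (q := q + 1) (by omega) ht
  have h₃ := offset_lt (k := k) (by omega) q t
  have h₄ := offset_lt (k := k) (by omega) (q + 1) t
  unfold firstSlot secondSlot
  split_ifs <;> omega

lemma teams_eq_iff {k q s t : ℕ} (hq : q < k) (hs : s < 2 * k + 1) (ht : t < 2 * k + 1) :
    (t = teamA k q s ∨ t = teamB k q s) ↔ (s = firstSlot k q t ∨ s = secondSlot k q t) := by
  have h₁ := offset_add (q := q) (by omega) (show t ≤ 2 * k by omega)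
  have h₂ := offset_lt (k := k) (by omega) q t
  unfold teamA teamB firstSlot secondSlot
  split_ifs <;> omega

lemma teamA_lt {k q s : ℕ} (hq : q < k) (hs : s < 2 * k + 1) : teamA k q s < 2 * k + 1 := by
  unfold teamA; split_ifs <;> omega

lemma teamB_lt {k q s : ℕ} (hq : q < k) (hs : s < 2 * k + 1) : teamB k q s < 2 * k + 1 := by
  unfold teamB; split_ifs <;> omega

lemma teamA_ne_teamB {k q s : ℕ} (hq : q < k) (hs : s < 2 * k + 1) : teamA k q s ≠ teamB k q s := by
  unfold teamA teamB; split_ifs <;> omega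

lemma eq_of_teams_eq {k q s q' s' : ℕ} (hq : q < k) (hq' : q' < k)
    (hs : s < 2 * k + 1) (hs' : s' < 2 * k + 1)
    (h : (teamA k q s = teamA k q' s' ∧ teamB k q s = teamB k q' s') ∨
         (teamA k q s = teamB k q' s' ∧ teamB k q s = teamA k q' s')) : q = q' ∧ s = s' := by
  unfold teamA teamB at h
  rcases h with ⟨h₁, h₂⟩ | ⟨h₁, h₂⟩ <;> split_ifs at h₁ h₂ <;> omega

def schedule (k i : ℕ) : Sym2 (Fin (2 * k + 1)) :=
  s(Fin.ofNat _ (teamA k (i / (2 * k + 1)) (i % (2 * k + 1))),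
    Fin.ofNat _ (teamB k (i / (2 * k + 1)) (i % (2 * k + 1))))

def gameTime (k t m : ℕ) : ℕ :=
  m / 2 * (2 * k + 1) + if m % 2 = 0 then firstSlot k (m / 2) t else secondSlot k (m / 2) t

lemma div_mod_of_lt {k q s : ℕ} (hs : s < 2 * k + 1) :
    (q * (2 * k + 1) + s) / (2 * k + 1) = q ∧ (q * (2 * k + 1) + s) % (2 * k + 1) = s :=
  (Nat.div_mod_unique (by omega)).2 ⟨by ring, hs⟩

lemma eq_of_block_slot_eq {k q s q' s' : ℕ} (hs : s < 2 * k + 1) (hs' : s' < 2 * k + 1)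
    (h : q * (2 * k + 1) + s = q' * (2 * k + 1) + s') : q = q' ∧ s = s' := by
  have h₁ := div_mod_of_lt (q := q) hs
  rw [h, (div_mod_of_lt hs').1, (div_mod_of_lt hs').2] at h₁
  exact ⟨h₁.1.symm, h₁.2.symm⟩

lemma exists_block_slot {k i : ℕ} (hi : i < (2 * k + 1) * k) :
    ∃ q s, q < k ∧ s < 2 * k + 1 ∧ q * (2 * k + 1) + s = i :=
  ⟨i / (2 * k + 1), i % (2 * k + 1), Nat.div_lt_of_lt_mul hi, Nat.mod_lt _ (by omega),
    Nat.div_add_mod' i _⟩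

lemma schedule_block_slot {k q s : ℕ} (hs : s < 2 * k + 1) :
    schedule k (q * (2 * k + 1) + s) = s(Fin.ofNat _ (teamA k q s), Fin.ofNat _ (teamB k q s)) := by
  rw [schedule, (div_mod_of_lt hs).1, (div_mod_of_lt hs).2]

lemma mem_schedule_iff {k q s : ℕ} (hq : q < k) (hs : s < 2 * k + 1) (t : Fin (2 * k + 1)) :
    t ∈ schedule k (q * (2 * k + 1) + s) ↔ s = firstSlot k q t ∨ s = secondSlot k q t := by
  rw [schedule_block_slot hs, Sym2.mem_iff, Fin.ext_iff, Fin.ext_iff, Fin.val_ofNat, Fin.val_ofNat,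
    Nat.mod_eq_of_lt (teamA_lt hq hs), Nat.mod_eq_of_lt (teamB_lt hq hs)]
  exact teams_eq_iff hq hs t.2

lemma schedule_not_isDiag {k i : ℕ} (hi : i < (2 * k + 1) * k) : ¬ (schedule k i).IsDiag := by
  obtain ⟨q, s, hq, hs, rfl⟩ := exists_block_slot hi
  rw [schedule_block_slot hs, Sym2.mk_isDiag_iff, Fin.ext_iff, Fin.val_ofNat, Fin.val_ofNat,
    Nat.mod_eq_of_lt (teamA_lt hq hs), Nat.mod_eq_of_lt (teamB_lt hq hs)]
  exact teamA_ne_teamB hq hs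

lemma eq_of_schedule_eq {k i j : ℕ} (hi : i < (2 * k + 1) * k) (hj : j < (2 * k + 1) * k)
    (h : schedule k i = schedule k j) : i = j := by
  obtain ⟨q, s, hq, hs, rfl⟩ := exists_block_slot hi
  obtain ⟨q', s', hq', hs', rfl⟩ := exists_block_slot hj
  rw [schedule_block_slot hs, schedule_block_slot hs', Sym2.eq_iff] at h
  simp only [Fin.ext_iff, Fin.val_ofNat, Nat.mod_eq_of_lt (teamA_lt hq hs),
    Nat.mod_eq_of_lt (teamB_lt hq hs), Nat.mod_eq_of_lt (teamA_lt hq' hs'),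
    Nat.mod_eq_of_lt (teamB_lt hq' hs')] at h
  obtain ⟨rfl, rfl⟩ := eq_of_teams_eq hq hq' hs hs' h
  rfl

lemma isSchedule_schedule {k : ℕ} : isSchedule (2 * k + 1) ((2 * k + 1) * k) (schedule k) := by
  refine ⟨fun i hi => schedule_not_isDiag hi, fun p hp => ?_⟩
  let φ : Fin ((2 * k + 1) * k) → {p : Sym2 (Fin (2 * k + 1)) // ¬ p.IsDiag} :=
    fun i => ⟨schedule k i, schedule_not_isDiag i.2⟩
  have hφ : φ.Injective := fun i j h => Fin.ext (eq_of_schedule_eq i.2 j.2 (congrArg Subtype.val h))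
  have hcard : Fintype.card (Fin ((2 * k + 1) * k)) =
      Fintype.card {p : Sym2 (Fin (2 * k + 1)) // ¬ p.IsDiag} := by
    rw [Fintype.card_fin, Sym2.card_subtype_not_diag, Fintype.card_fin, Nat.choose_two_right,
      show (2 * k + 1) * (2 * k + 1 - 1) = 2 * ((2 * k + 1) * k) by rw [Nat.add_sub_cancel]; ring,
      Nat.mul_div_cancel_left _ two_pos]
  obtain ⟨i, hi⟩ := ((Fintype.bijective_iff_injective_and_card φ).2 ⟨hφ, hcard⟩).2 ⟨p, hp⟩
  exact ⟨i, ⟨i.2, congrArg Subtype.val hi⟩, fun j ⟨hj, hjp⟩ =>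
    eq_of_schedule_eq hj i.2 (hjp.trans (congrArg Subtype.val hi).symm)⟩

lemma gameTime_two_mul (k t q : ℕ) : gameTime k t (2 * q) = q * (2 * k + 1) + firstSlot k q t := by
  simp [gameTime]

lemma gameTime_two_mul_add_one (k t q : ℕ) :
    gameTime k t (2 * q + 1) = q * (2 * k + 1) + secondSlot k q t := by
  simp [gameTime, Nat.add_mod, show (2 * q + 1) / 2 = q by omega]

lemma gameTime_strictMono {k : ℕ} (hk : 1 ≤ k) (t : ℕ) : StrictMono (gameTime k t) := by
  refine strictMono_nat_of_lt_succ fun m => ?_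
  obtain ⟨q, rfl | rfl⟩ := Nat.even_or_odd' m
  · have := slots_bounds hk q t
    rw [gameTime_two_mul, gameTime_two_mul_add_one]
    omega
  · have := slots_bounds hk q t
    have := add_one_mul q (2 * k + 1)
    rw [gameTime_two_mul_add_one, show 2 * q + 1 + 1 = 2 * (q + 1) by ring, gameTime_two_mul]
    omega

lemma isGameEnum_gameTime {k : ℕ} (hk : 1 ≤ k) (t : Fin (2 * k + 1)) :
    IsGameEnum (2 * k + 1) ((2 * k + 1) * k) (schedule k) t (2 * k) (gameTime k t) := by
  refine ⟨gameTime_strictMono hk t, fun i hi => ?_⟩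
  obtain ⟨q, s, hq, hs, rfl⟩ := exists_block_slot hi
  rw [mem_schedule_iff hq hs]
  constructor
  · rintro (rfl | rfl)
    · exact ⟨2 * q, by omega, gameTime_two_mul k t q⟩
    · exact ⟨2 * q + 1, by omega, gameTime_two_mul_add_one k t q⟩
  · rintro ⟨m, -, hmi⟩
    obtain ⟨q', rfl | rfl⟩ := Nat.even_or_odd' m
    · rw [gameTime_two_mul] at hmi
      obtain ⟨rfl, rfl⟩ := eq_of_block_slot_eq (by have := slots_bounds hk q' t; omega) hs hmi
      exact Or.inl rfl
    · rw [gameTime_two_mul_add_one] at hmi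
      obtain ⟨rfl, rfl⟩ := eq_of_block_slot_eq (by have := slots_bounds hk q' t; omega) hs hmi
      exact Or.inr rfl

lemma gameTime_zero_le {k : ℕ} (hk : 1 ≤ k) (t : ℕ) : gameTime k t 0 ≤ k := by
  simpa [gameTime] using (slots_bounds hk 0 t).1

lemma gameTime_gap {k m t : ℕ} (hk : 1 ≤ k) (hm : m + 1 < 2 * k) (ht : t ≤ 2 * k) :
    gameTime k t m + k ≤ gameTime k t (m + 1) ∧ gameTime k t (m + 1) ≤ gameTime k t m + k + 1 := by
  obtain ⟨q, rfl | rfl⟩ := Nat.even_or_odd' m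
  · have := slots_bounds hk q t
    rw [gameTime_two_mul, gameTime_two_mul_add_one]
    omega
  · have := gap_across_blocks (show q + 1 < k by omega) ht
    have := add_one_mul q (2 * k + 1)
    rw [gameTime_two_mul_add_one, show 2 * q + 1 + 1 = 2 * (q + 1) by ring, gameTime_two_mul]
    omega

lemma gameTime_le_gameTime_succ {k : ℕ} (hk : 1 ≤ k) (t t' m : ℕ) :
    gameTime k t' m ≤ gameTime k t (m + 1) := by
  obtain ⟨q, rfl | rfl⟩ := Nat.even_or_odd' m
  · have := slots_bounds hk q t
    have := slots_bounds hk q t'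
    rw [gameTime_two_mul, gameTime_two_mul_add_one]
    omega
  · have := slots_bounds hk q t'
    have := add_one_mul q (2 * k + 1)
    rw [gameTime_two_mul_add_one, show 2 * q + 1 + 1 = 2 * (q + 1) by ring, gameTime_two_mul]
    omega

lemma hasRest_schedule {k : ℕ} (hk : 1 ≤ k) :
    hasRest (2 * k + 1) ((2 * k + 1) * k) (schedule k) (k - 1) :=
  hasRest_of_gap (isGameEnum_gameTime hk) fun t _ hm => by
    have := gameTime_gap hk hm (Nat.le_of_lt_succ t.2)
    omega

lemma gpLe_one_schedule {k : ℕ} (hk : 1 ≤ k) : gpLe (2 * k + 1) ((2 * k + 1) * k) (schedule k) 1 :=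
  gpLe_one_of_interlace (isGameEnum_gameTime hk) fun t t' m _ => gameTime_le_gameTime_succ hk t t' m

lemma rdLe_one_schedule {k : ℕ} (hk : 1 ≤ k) : rdLe (2 * k + 1) ((2 * k + 1) * k) (schedule k) 1 :=
  rdLe_one_of_gap (isGameEnum_gameTime hk) (fun t => gameTime_zero_le hk t)
    fun t _ hm => gameTime_gap hk hm (Nat.le_of_lt_succ t.2)

lemma gameTime_last (k : ℕ) : gameTime k (2 * k) 0 = 0 ∧ gameTime k (2 * k) 1 = k := by
  simp [gameTime, firstSlot, secondSlot]

lemma gameTime_self_zero {k : ℕ} (hk : 1 ≤ k) : gameTime k k 0 = k := by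
  have := offset_add (k := k) (q := 0) (t := k) (by omega) (by omega)
  have h := gameTime_two_mul k k 0
  simp only [mul_zero, zero_mul, zero_add] at h
  rw [h, firstSlot]
  split_ifs <;> omega

lemma not_gpLe_zero_schedule {k : ℕ} (hk : 1 ≤ k) :
    ¬ gpLe (2 * k + 1) ((2 * k + 1) * k) (schedule k) 0 := by
  have hN : 1 ≤ (2 * k + 1) * k := Nat.one_le_iff_ne_zero.2 (by positivity)
  exact not_gpLe_zero_of_mem_of_not_mem hN
    ((isGameEnum_gameTime hk ⟨2 * k, by omega⟩).mem (m := 0) (by omega) (gameTime_last k).1 hN)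
    ((isGameEnum_gameTime hk ⟨k, by omega⟩).not_mem_of_lt_zero
      (by simp only [gameTime_self_zero hk]; omega) hN)

lemma not_rdLe_zero_schedule {k : ℕ} (hk : 1 ≤ k) :
    ¬ rdLe (2 * k + 1) ((2 * k + 1) * k) (schedule k) 0 := by
  intro h
  have hN : k < (2 * k + 1) * k := by nlinarith
  obtain ⟨h₀, h₁⟩ := gameTime_last k
  have h₂ := gameTime_self_zero hk
  have hlast := isGameEnum_gameTime hk ⟨2 * k, by omega⟩
  have hself := isGameEnum_gameTime hk ⟨k, by omega⟩
  have hrest_last := hlast.rest_succ (m := 0) (by omega) (h₁.trans_lt hN)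
  have hrest_self := hself.rest_zero (h₂.trans_lt hN)
  simp only [h₀, h₁, h₂] at hrest_last hrest_self
  have := h k hN _ _ (hself.mem (m := 0) (by omega) h₂ hN) (hlast.mem (m := 1) (by omega) h₁ hN)
  omega

end Walecki

/-- For odd `n = 2k+1 ≥ 3`, there exists a schedule with guaranteed rest time `k-1`,
games-played difference index exactly `1`, and rest difference index exactly `1`. -/
theorem stmt15 (k : ℕ) (hk : 1 ≤ k) :
    ∃ f : ℕ → Sym2 (Fin (2*k+1)), isSchedule (2*k+1) ((2*k+1)*(2*k)/2) f ∧
      hasRest (2*k+1) ((2*k+1)*(2*k)/2) f (k-1) ∧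
      (gpLe (2*k+1) ((2*k+1)*(2*k)/2) f 1 ∧ ¬ gpLe (2*k+1) ((2*k+1)*(2*k)/2) f 0) ∧
      (rdLe (2*k+1) ((2*k+1)*(2*k)/2) f 1 ∧ ¬ rdLe (2*k+1) ((2*k+1)*(2*k)/2) f 0) := by
  have hN : (2*k+1)*(2*k)/2 = (2*k+1)*k := by
    rw [show (2*k+1)*(2*k) = 2*((2*k+1)*k) by ring, Nat.mul_div_cancel_left _ two_pos]
  rw [hN]
  exact ⟨Walecki.schedule k, Walecki.isSchedule_schedule, Walecki.hasRest_schedule hk,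
    ⟨Walecki.gpLe_one_schedule hk, Walecki.not_gpLe_zero_schedule hk⟩,
    ⟨Walecki.rdLe_one_schedule hk, Walecki.not_rdLe_zero_schedule hk⟩⟩
end

section
/- For n = 2k+1 teams (n ≥ 3), in any schedule with guaranteed rest time k-1, each team's rest between consecutive games it plays is either exactly k-1 or exactly k games, and each team sits out exactly one of the 2k+1 rounds of k consecutive games. -/
/-! Games sharing a team are at least `k` apart, so any `k` consecutive games involve `2k`
distinct teams: all teams but one. If a team `t` rested more than `k` games after game `i`, the
two teams of game `i + 1` would both have to play among the `k` games following it while `t` is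
idle, and spacing forces both into game `i + k + 1`, a repetition of game `i + 1`. For the rounds:
each team plays `2k` games, at most one per round, so it misses exactly one of the `2k + 1`
rounds. -/

open Finset

section Schedule

variable {n N : ℕ} {f : ℕ → Sym2 (Fin n)}

theorem isSchedule.injOn (hf : isSchedule n N f) : Set.InjOn f (Set.Iio N) := by
  intro i hi j hj hij
  obtain ⟨m, -, hm⟩ := hf.2 (f i) (hf.1 i hi)
  exact (hm i ⟨hi, rfl⟩).trans (hm j ⟨hj, hij.symm⟩).symm

theorem isSchedule.played_eq (hf : isSchedule n N f) (t : Fin n) : played n f t N = n - 1 := by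
  have hbij : played n f t N = #(univ.erase t) := by
    refine card_bij (fun i hi => Sym2.Mem.other (mem_filter.mp hi).2) ?_ ?_ ?_
    · intro i hi
      obtain ⟨hiN, hti⟩ := mem_filter.mp hi
      exact mem_erase.mpr ⟨Sym2.other_ne (hf.1 i (mem_range.mp hiN)) hti, mem_univ _⟩
    · intro i hi j hj hij
      obtain ⟨hiN, hti⟩ := mem_filter.mp hi
      obtain ⟨hjN, htj⟩ := mem_filter.mp hj
      refine hf.injOn (mem_range.mp hiN) (mem_range.mp hjN) ?_
      rw [← Sym2.other_spec hti, ← Sym2.other_spec htj, Sym2.congr_right.mpr hij]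
    · intro u hu
      have hndiag : ¬ (s(t, u) : Sym2 (Fin n)).IsDiag :=
        Sym2.mk_isDiag_iff.not.mpr (mem_erase.mp hu).1.symm
      obtain ⟨m, ⟨hmN, hm⟩, -⟩ := hf.2 s(t, u) hndiag
      have htm : t ∈ f m := hm ▸ Sym2.mem_mk_left t u
      exact ⟨m, mem_filter.mpr ⟨mem_range.mpr hmN, htm⟩,
        Sym2.congr_right.mp ((Sym2.other_spec htm).trans hm)⟩
  rw [hbij, card_erase_of_mem (mem_univ t), card_univ, Fintype.card_fin]

theorem hasRest.add_lt {b : ℕ} (hr : hasRest n N f b) {t : Fin n} {i j : ℕ} (hij : i < j)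
    (hjN : j < N) (hti : t ∈ f i) (htj : t ∈ f j) : i + b < j := by
  have hb := (hr t i j hij hjN hti htj).trans (card_filter_le _ _)
  rw [Nat.card_Ioo] at hb
  omega

theorem card_teams_Ico (hf : isSchedule n N f) {k : ℕ} (hr : hasRest n N f (k - 1)) {a : ℕ}
    (ha : a + k ≤ N) : #((Ico a (a + k)).biUnion fun l => (f l).toFinset) = 2 * k := by
  rw [card_biUnion]
  · rw [sum_congr rfl fun l hl =>
      Sym2.card_toFinset_of_not_isDiag _ (hf.1 l (by rw [mem_Ico] at hl; omega))]
    simp [mul_comm]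
  · intro x hx y hy hxy
    rw [Function.onFun, disjoint_left]
    intro u hux huy
    rw [Sym2.mem_toFinset] at hux huy
    rw [coe_Ico, Set.mem_Ico] at hx hy
    rcases hxy.lt_or_gt with h | h
    · have := hr.add_lt h (by omega) hux huy; omega
    · have := hr.add_lt h (by omega) huy hux; omega

end Schedule

theorem exists_mem_of_forall_notMem_Ico {N k : ℕ} {f : ℕ → Sym2 (Fin (2 * k + 1))}
    (hf : isSchedule (2 * k + 1) N f) (hr : hasRest (2 * k + 1) N f (k - 1)) {a : ℕ}
    (ha : a + k ≤ N) {t u : Fin (2 * k + 1)} (hut : u ≠ t)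
    (ht : ∀ l ∈ Ico a (a + k), t ∉ f l) : ∃ l ∈ Ico a (a + k), u ∈ f l := by
  set teams := (Ico a (a + k)).biUnion fun l => (f l).toFinset
  have hsub : teams ⊆ univ.erase t := by
    intro w hw
    obtain ⟨l, hl, hwl⟩ := mem_biUnion.mp hw
    rw [Sym2.mem_toFinset] at hwl
    exact mem_erase.mpr ⟨fun hwt => ht l hl (hwt ▸ hwl), mem_univ w⟩
  have heq : teams = univ.erase t := eq_of_subset_of_card_le hsub (by
    rw [card_teams_Ico hf hr ha, card_erase_of_mem (mem_univ t), card_univ, Fintype.card_fin]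
    omega)
  obtain ⟨l, hl, hul⟩ := mem_biUnion.mp (heq ▸ mem_erase.mpr ⟨hut, mem_univ u⟩ : u ∈ teams)
  exact ⟨l, hl, Sym2.mem_toFinset.mp hul⟩

theorem le_add_add_one_of_forall_notMem {N k : ℕ} {f : ℕ → Sym2 (Fin (2 * k + 1))}
    (hf : isSchedule (2 * k + 1) N f) (hr : hasRest (2 * k + 1) N f (k - 1))
    {t : Fin (2 * k + 1)} {i j : ℕ} (hjN : j < N)
    (hbetween : ∀ l, i < l → l < j → t ∉ f l) : j ≤ i + k + 1 := by
  by_contra! hj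
  have hwindow : ∀ l ∈ Ico (i + 2) (i + 2 + k), t ∉ f l := fun l hl =>
    hbetween l (by rw [mem_Ico] at hl; omega) (by rw [mem_Ico] at hl; omega)
  have hreturn : ∀ u ∈ f (i + 1), u ∈ f (i + k + 1) := by
    intro u hu
    have hut : u ≠ t := fun hut => hbetween (i + 1) (by omega) (by omega) (hut ▸ hu)
    obtain ⟨l, hl, hul⟩ := exists_mem_of_forall_notMem_Ico hf hr (by omega) hut hwindow
    rw [mem_Ico] at hl
    have := hr.add_lt (by omega : i + 1 < l) (by omega) hu hul
    rwa [show l = i + k + 1 by omega] at hul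
  have hndiag := hf.1 (i + 1) (by omega)
  induction hgame : f (i + 1) using Sym2.ind with
  | h u v =>
    rw [hgame] at hreturn hndiag
    have hne : u ≠ v := Sym2.mk_isDiag_iff.not.mp hndiag
    have hagain : f (i + k + 1) = s(u, v) := (Sym2.mem_and_mem_iff hne).mp
      ⟨hreturn u (Sym2.mem_mk_left u v), hreturn v (Sym2.mem_mk_right u v)⟩
    have := hf.injOn (show i + 1 < N by omega) (show i + k + 1 < N by omega)
      (hgame.trans hagain.symm)
    omega

theorem existsUnique_block_forall_not {k m : ℕ} (hk : 0 < k) {P : ℕ → Prop} [DecidablePred P]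
    (hsep : ∀ i j, i < j → j < m * k → P i → P j → i + k ≤ j)
    (hcard : #((range (m * k)).filter P) + 1 = m) :
    ∃! r, r < m ∧ ∀ l, r * k ≤ l → l < (r + 1) * k → ¬ P l := by
  set G := (range (m * k)).filter P
  have hmono : StrictMonoOn (· / k) (G : Set ℕ) := by
    intro i hi j hj hij
    simp only [mem_coe, G, mem_filter, mem_range] at hi hj
    calc i / k < i / k + 1 := Nat.lt_succ_self _
      _ = (i + k) / k := (Nat.add_div_right i hk).symm
      _ ≤ j / k := Nat.div_le_div_right (hsep i j hij hj.1 hi.2 hj.2)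
  have hmaps : Set.MapsTo (· / k) (G : Set ℕ) (range m) := by
    intro i hi
    simp only [mem_coe, G, mem_filter, mem_range] at hi
    exact mem_range.mpr ((Nat.div_lt_iff_lt_mul hk).mpr hi.1)
  refine (existsUnique_congr fun r => ?_).mp
    (existsUnique_notMem_image_of_injOn_of_card_eq_add_one hmono.injOn hmaps (by simp [hcard]))
  simp only [mem_range, mem_image, G, mem_filter, not_exists, not_and, and_congr_right_iff]
  intro hr
  constructor
  · intro h l hlo hhi hl
    exact h l ⟨hhi.trans_le (Nat.mul_le_mul_right k hr), hl⟩ (Nat.div_eq_of_lt_le hlo hhi)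
  · rintro h l ⟨-, hl⟩ rfl
    exact h l (Nat.div_mul_le_self l k) (by rw [Nat.add_one_mul]; exact Nat.lt_div_mul_add hk) hl

/-- For `n = 2k+1` teams, in any schedule with guaranteed rest time `k-1`, each team's
rest between consecutive games it plays is exactly `k-1` or exactly `k` games, and each
team sits out exactly one of the `2k+1` rounds of `k` consecutive games. -/
theorem stmt18 (k : ℕ) (hk : 1 ≤ k) (f : ℕ → Sym2 (Fin (2*k+1)))
    (hf : isSchedule (2*k+1) ((2*k+1)*(2*k)/2) f)
    (hrest : hasRest (2*k+1) ((2*k+1)*(2*k)/2) f (k-1)) :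
    (∀ t : Fin (2*k+1), ∀ i j, i < j → j < ((2*k+1)*(2*k)/2) → t ∈ f i → t ∈ f j →
      (∀ l, i < l → l < j → t ∉ f l) → j - i - 1 = k - 1 ∨ j - i - 1 = k) ∧
    (∀ t : Fin (2*k+1), ∃! r, r < 2*k+1 ∧ ∀ l, r*k ≤ l → l < (r+1)*k → t ∉ f l) := by
  have hN : (2*k+1)*(2*k)/2 = (2*k+1)*k := by
    rw [show (2*k+1)*(2*k) = (2*k+1)*k*2 by ring, Nat.mul_div_cancel _ two_pos]
  rw [hN] at hf hrest ⊢
  refine ⟨fun t i j hij hjN hti htj hbetween => ?_, fun t => ?_⟩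
  · have hlow := hrest.add_lt hij hjN hti htj
    have hhigh := le_add_add_one_of_forall_notMem hf hrest hjN hbetween
    omega
  · refine existsUnique_block_forall_not hk (fun i j hij hjN hti htj => ?_) ?_
    · have := hrest.add_lt hij hjN hti htj
      omega
    · rw [← played, hf.played_eq]
      omega
end
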